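/- arXiv:math/0306169 — 8 statements merged into one kernel-verified Lean document; each statement's English description precedes it below -/
import Mathlib

section
/- Let k be a differential field of characteristic zero and let P ∈ k{x} be an irreducible differential polynomial of order N ≥ 0. Define I(P) to be the set of all Q ∈ k{x} such that S_P^m · Q ∈ ⟨P⟩ for some natural number m. Then I(P) is a prime differential ideal of k{x} containing P, I(P) contains no nonzero element of order strictly less than N, and every element of I(P) of order N is a multiple of P. -/
open MvPolynomial

/-!
Let `S = ∂P/∂x_N` be the separant. Each derivative `D^[j+1] P` is `S · x_{N+1+j}` plus a
polynomial in lower variables. Hence, modulo `⟨P⟩` and after multiplication by a power of `S`,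
every differential polynomial reduces to one of order `≤ N`. The same triangular shape lets one
solve `D^[j] P = 0` successively for `x_{N+1}, x_{N+2}, …` in the fraction field of `k{x}/(P)`,
where `S ≠ 0` since `P ∤ S` by degree in `x_N`. This yields a ring map `e` that kills `⟨P⟩`
and agrees with the quotient map in order `≤ N`, so `I(P) = ker e` is prime, and an element of
order `≤ N` lies in it iff `P` divides it.
-/

namespace Derivation

theorem map_mem_supported {R k σ : Type*} [CommSemiring R] [CommSemiring k] [Algebra R k]
    (d : Derivation R (MvPolynomial σ k) (MvPolynomial σ k)) {s t : Set σ} (hst : s ⊆ t)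
    (hC : ∀ a, d (C a) ∈ supported k t) (hX : ∀ i ∈ s, d (X i) ∈ supported k t)
    {p : MvPolynomial σ k} (hp : p ∈ supported k s) : d p ∈ supported k t := by
  have hle : supported k s ≤ supported k t := supported_mono hst
  induction hp using Algebra.adjoin_induction with
  | mem x hx =>
    obtain ⟨i, hi, rfl⟩ := hx
    exact hX i hi
  | algebraMap a => exact hC a
  | add x y _ _ hx hy => rw [map_add]; exact add_mem hx hy
  | mul x y hx' hy' hx hy =>
    rw [leibniz]
    exact add_mem (mul_mem (hle hx') hy) (mul_mem (hle hy') hx)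

variable {R A : Type*} [CommSemiring R] [CommRing A] [Algebra R A]

theorem map_mem_span_of_forall_mem (d : Derivation R A A) {s : Set A}
    (hs : ∀ a ∈ s, d a ∈ s) {a : A} (ha : a ∈ Ideal.span s) : d a ∈ Ideal.span s := by
  induction ha using Submodule.span_induction with
  | mem x hx => exact Ideal.subset_span (hs x hx)
  | zero => rw [map_zero]; exact zero_mem _
  | add x y _ _ hx hy => rw [map_add]; exact add_mem hx hy
  | smul b x hx' hx =>
    rw [smul_eq_mul, leibniz, smul_eq_mul, smul_eq_mul]
    exact add_mem (Ideal.mul_mem_left _ _ hx) (Ideal.mul_mem_right _ _ hx')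

theorem pow_succ_mul_map_mem (d : Derivation R A A) {J : Ideal A} (hJ : ∀ a ∈ J, d a ∈ J)
    {s a : A} {m : ℕ} (h : s ^ m * a ∈ J) : s ^ (m + 1) * d a ∈ J := by
  have hsm : s * d (s ^ m) = m * s ^ m * d s := by
    cases m with
    | zero => simp
    | succ m => rw [leibniz_pow, nsmul_eq_mul, smul_eq_mul, Nat.add_sub_cancel]; ring
  have key : s ^ (m + 1) * d a = s * d (s ^ m * a) - m * d s * (s ^ m * a) := by
    rw [leibniz, smul_eq_mul, smul_eq_mul]
    linear_combination -a * hsm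
  rw [key]
  exact sub_mem (Ideal.mul_mem_left _ _ (hJ _ h)) (Ideal.mul_mem_left _ _ h)

end Derivation

namespace MvPolynomial

variable {R σ : Type*} [CommSemiring R] {s : Set σ} {i : σ} {p q : MvPolynomial σ R}

theorem eval₂_eq_eval₂_of_mem_supported {S : Type*} [CommSemiring S] (f : R →+* S)
    {g₁ g₂ : σ → S} (hp : p ∈ supported R s) (h : Set.EqOn g₁ g₂ s) :
    eval₂ f g₁ p = eval₂ f g₂ p :=
  eval₂_congr f g₁ g₂ fun hi hc =>
    h (mem_supported.mp hp ((mem_vars_iff_mem_support _).mpr ⟨_, mem_support_iff.mpr hc, hi⟩))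

theorem pderiv_eq_zero_of_mem_supported (hp : p ∈ supported R s) (hi : i ∉ s) :
    pderiv i p = 0 :=
  pderiv_eq_zero_of_notMem_vars fun h => hi (mem_supported.mp hp h)

theorem degreeOf_pderiv_lt (h : i ∈ p.vars) : degreeOf i (pderiv i p) < degreeOf i p := by
  have hpos : 0 < degreeOf i p := Nat.pos_of_ne_zero (mem_vars_iff_degreeOf_ne_zero.mp h)
  refine (degreeOf_lt_iff hpos).mpr fun m hm => ?_
  rw [mem_support_iff, coeff_pderiv] at hm
  have := monomial_le_degreeOf i (mem_support_iff.mpr (left_ne_zero_of_mul hm))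
  simp only [Finsupp.add_apply, Finsupp.single_eq_same] at this
  omega

theorem pderiv_ne_zero_of_mem_vars [CharZero R] [NoZeroDivisors R] (h : i ∈ p.vars) :
    pderiv i p ≠ 0 := by
  classical
  obtain ⟨m, hm, hmi⟩ := (mem_vars_iff_mem_support i).mp h
  have hm' : m - Finsupp.single i 1 + Finsupp.single i 1 = m :=
    tsub_add_cancel_of_le (Finsupp.single_le_iff.mpr (Nat.one_le_iff_ne_zero.mpr
      (Finsupp.mem_support_iff.mp hmi)))
  intro h0
  have := congrArg (coeff (m - Finsupp.single i 1)) h0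
  rw [coeff_pderiv, hm', coeff_zero] at this
  exact mul_ne_zero (mem_support_iff.mp hm) (by norm_cast) this

theorem degreeOf_le_of_dvd [NoZeroDivisors R] (h : p ∣ q) (hq : q ≠ 0) :
    degreeOf i p ≤ degreeOf i q := by
  obtain ⟨r, rfl⟩ := h
  rw [degreeOf_mul_eq (left_ne_zero_of_mul hq) (right_ne_zero_of_mul hq)]
  omega

theorem not_dvd_pderiv [CharZero R] [NoZeroDivisors R] (h : i ∈ p.vars) :
    ¬ p ∣ pderiv i p := fun hdvd =>
  (degreeOf_le_of_dvd hdvd (pderiv_ne_zero_of_mem_vars h)).not_gt (degreeOf_pderiv_lt h)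

theorem eq_zero_of_dvd_of_notMem_vars [NoZeroDivisors R] (hp : i ∈ p.vars) (hq : i ∉ q.vars)
    (h : p ∣ q) : q = 0 := by
  by_contra hq0
  have := degreeOf_le_of_dvd (i := i) h hq0
  rw [mem_vars_iff_degreeOf_ne_zero] at hp hq
  omega

theorem pderiv_mem_supported (hp : p ∈ supported R s) : pderiv i p ∈ supported R s := by
  classical
  refine (pderiv i : Derivation R (MvPolynomial σ R) _).map_mem_supported subset_rfl
    (fun a => ?_) (fun j _ => ?_) hp
  · rw [pderiv_C]; exact zero_mem _
  · rw [pderiv_X, Pi.single_apply]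
    split_ifs
    · exact one_mem _
    · exact zero_mem _

noncomputable def triangularSolution (F : ℕ → MvPolynomial ℕ R) : ℕ → R := fun v =>
  eval (fun i => if i < v then triangularSolution F i else 0) (F v)
termination_by v => v

theorem triangularSolution_eq {F : ℕ → MvPolynomial ℕ R}
    (hF : ∀ v, F v ∈ supported R (Set.Iio v)) (v : ℕ) :
    triangularSolution F v = eval (triangularSolution F) (F v) := by
  rw [triangularSolution]
  exact eval₂_eq_eval₂_of_mem_supported _ (hF v) fun i hi => if_pos hi

end MvPolynomial

def Subalgebra.saturationModulo {R A : Type*} [CommSemiring R] [CommRing A] [Algebra R A]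
    (L : Subalgebra R A) (J : Ideal A) {s : A} (hs : s ∈ L) : Subalgebra R A where
  carrier := {a | ∃ t : ℕ, ∃ b ∈ L, s ^ t * a - b ∈ J}
  mul_mem' := by
    rintro a₁ a₂ ⟨t₁, b₁, hb₁, h₁⟩ ⟨t₂, b₂, hb₂, h₂⟩
    refine ⟨t₁ + t₂, b₁ * b₂, mul_mem hb₁ hb₂, ?_⟩
    have : s ^ (t₁ + t₂) * (a₁ * a₂) - b₁ * b₂ =
        s ^ t₂ * a₂ * (s ^ t₁ * a₁ - b₁) + b₁ * (s ^ t₂ * a₂ - b₂) := by ring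
    rw [this]
    exact add_mem (J.mul_mem_left _ h₁) (J.mul_mem_left _ h₂)
  add_mem' := by
    rintro a₁ a₂ ⟨t₁, b₁, hb₁, h₁⟩ ⟨t₂, b₂, hb₂, h₂⟩
    refine ⟨t₁ + t₂, s ^ t₂ * b₁ + s ^ t₁ * b₂,
      add_mem (mul_mem (pow_mem hs _) hb₁) (mul_mem (pow_mem hs _) hb₂), ?_⟩
    have : s ^ (t₁ + t₂) * (a₁ + a₂) - (s ^ t₂ * b₁ + s ^ t₁ * b₂) =
        s ^ t₂ * (s ^ t₁ * a₁ - b₁) + s ^ t₁ * (s ^ t₂ * a₂ - b₂) := by ring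
    rw [this]
    exact add_mem (J.mul_mem_left _ h₁) (J.mul_mem_left _ h₂)
  algebraMap_mem' r := ⟨0, _, L.algebraMap_mem r, by simp⟩

theorem RingHom.mem_ker_iff_exists_pow_mul_mem {A K : Type*} [CommRing A] [CommRing K]
    [IsDomain K] (e : A →+* K) {J : Ideal A} (hJ : J ≤ RingHom.ker e) {s : A} (hs : e s ≠ 0)
    {L : Set A} (hL : ∀ b ∈ L, e b = 0 → b ∈ J)
    (hred : ∀ a, ∃ t : ℕ, ∃ b ∈ L, s ^ t * a - b ∈ J) (a : A) :
    a ∈ RingHom.ker e ↔ ∃ m : ℕ, s ^ m * a ∈ J := by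
  constructor
  · intro ha
    obtain ⟨t, b, hb, hJb⟩ := hred a
    have heb : e b = 0 := by
      have := hJ hJb
      rwa [RingHom.mem_ker, map_sub, map_mul, RingHom.mem_ker.mp ha, mul_zero, zero_sub,
        neg_eq_zero] at this
    refine ⟨t, ?_⟩
    simpa using add_mem hJb (hL b hb heb)
  · rintro ⟨m, hm⟩
    have := hJ hm
    rw [RingHom.mem_ker, map_mul, map_pow] at this
    exact (mul_eq_zero.mp this).resolve_left (pow_ne_zero m hs)

section DifferentialPolynomial

open Set

variable {k : Type*} [CommRing k] [Nontrivial k]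
  {D : Derivation ℤ (MvPolynomial ℕ k) (MvPolynomial ℕ k)} {δ : k → k}

variable (hDC : ∀ a, D (C a) = C (δ a)) (hDX : ∀ n, D (X n) = X (n + 1))
include hDC hDX

theorem map_sub_X_mul_pderiv_mem_supported {M : ℕ} {Q : MvPolynomial ℕ k}
    (hQ : Q ∈ supported k (Iio (M + 1))) :
    D Q - X (M + 1) * pderiv M Q ∈ supported k (Iio (M + 1)) := by
  let d := D - (X (M + 1) : MvPolynomial ℕ k) •
    (pderiv M : Derivation k (MvPolynomial ℕ k) _).restrictScalars ℤ
  have hd : ∀ p, d p = D p - X (M + 1) * pderiv M p := fun _ => rfl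
  refine hd Q ▸ d.map_mem_supported subset_rfl (fun a => ?_) (fun i hi => ?_) hQ
  · rw [hd, hDC, pderiv_C, mul_zero, sub_zero]
    exact (supported k _).algebraMap_mem (δ a)
  · rw [hd, hDX]
    obtain rfl | hiM := eq_or_ne i M
    · rw [pderiv_X_self, mul_one, sub_self]
      exact zero_mem _
    · rw [pderiv_X_of_ne hiM, mul_zero, sub_zero]
      exact X_mem_supported.mpr (by simp only [mem_Iio] at hi ⊢; omega)

theorem iterate_sub_X_mul_pderiv_mem_supported {N : ℕ} {P : MvPolynomial ℕ k}
    (hP : P ∈ supported k (Iio (N + 1))) (j : ℕ) :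
    D^[j + 1] P - X (N + 1 + j) * pderiv N P ∈ supported k (Iio (N + 1 + j)) := by
  induction j with
  | zero => exact map_sub_X_mul_pderiv_mem_supported hDC hDX hP
  | succ j ih =>
    set S := pderiv N P
    set Q := D^[j + 1] P
    have hS : S ∈ supported k (Iio (N + 1 + j)) :=
      supported_mono (Iio_subset_Iio (by omega)) (pderiv_mem_supported hP)
    have hXS : X (N + 1 + j) * S ∈ supported k (Iio (N + 1 + j + 1)) :=
      mul_mem (X_mem_supported.mpr (mem_Iio.mpr (lt_add_one _)))
        (supported_mono (Iio_subset_Iio (by omega)) hS)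
    have hQ : Q ∈ supported k (Iio (N + 1 + j + 1)) := by
      simpa using add_mem (supported_mono (Iio_subset_Iio (by omega)) ih) hXS
    have hpQ : pderiv (N + 1 + j) Q = S := by
      have hnot : N + 1 + j ∉ Iio (N + 1 + j) := self_notMem_Iio
      rw [← sub_add_cancel Q (X (N + 1 + j) * S), map_add, pderiv_mul, pderiv_X_self,
        pderiv_eq_zero_of_mem_supported ih hnot, pderiv_eq_zero_of_mem_supported hS hnot]
      ring
    rw [Function.iterate_succ_apply']
    exact hpQ ▸ map_sub_X_mul_pderiv_mem_supported hDC hDX hQ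

theorem exists_pow_pderiv_mul_sub_mem {N : ℕ} {P : MvPolynomial ℕ k}
    (hP : P ∈ supported k (Iio (N + 1))) {J : Ideal (MvPolynomial ℕ k)}
    (hJ : ∀ j, D^[j] P ∈ J) (Q : MvPolynomial ℕ k) :
    ∃ t : ℕ, ∃ Q' ∈ supported k (Iio (N + 1)), pderiv N P ^ t * Q - Q' ∈ J := by
  set S := pderiv N P
  set L := supported k (Iio (N + 1))
  set T := L.saturationModulo J (pderiv_mem_supported hP : S ∈ L)
  have hLT : L ≤ T := fun b hb => ⟨0, b, hb, by simp⟩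
  have hX : ∀ v, X v ∈ T := by
    intro v
    induction v using Nat.strong_induction_on with
    | _ v ih =>
    rcases le_or_gt v N with hv | hv
    · exact hLT (X_mem_supported.mpr (Nat.lt_succ_of_le hv))
    obtain ⟨j, rfl⟩ : ∃ j, v = N + 1 + j := ⟨v - (N + 1), by omega⟩
    have hlow : supported k (Iio (N + 1 + j)) ≤ T :=
      Algebra.adjoin_le (by rintro _ ⟨i, hi, rfl⟩; exact ih i hi)
    obtain ⟨t, b, hb, h⟩ := hlow (iterate_sub_X_mul_pderiv_mem_supported hDC hDX hP j)
    refine ⟨t + 1, -b, neg_mem hb, ?_⟩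
    have : S ^ (t + 1) * X (N + 1 + j) - -b =
        S ^ t * D^[j + 1] P - (S ^ t * (D^[j + 1] P - X (N + 1 + j) * S) - b) := by ring
    rw [this]
    exact sub_mem (J.mul_mem_left _ (hJ _)) h
  have hT : T = ⊤ := eq_top_iff.mpr <|
    adjoin_range_X.symm.le.trans (Algebra.adjoin_le (range_subset_iff.mpr hX))
  exact (hT ▸ Algebra.mem_top : Q ∈ T)

theorem exists_ringHom_map_iterate_eq_zero {K : Type*} [Field K] {N : ℕ} {P : MvPolynomial ℕ k}
    (hP : P ∈ supported k (Iio (N + 1))) (ψ : MvPolynomial ℕ k →+* K) (hψP : ψ P = 0)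
    (hψS : ψ (pderiv N P) ≠ 0) :
    ∃ e : MvPolynomial ℕ k →+* K,
      (∀ q ∈ supported k (Iio (N + 1)), e q = ψ q) ∧ ∀ j, e (D^[j] P) = 0 := by
  set S := pderiv N P
  -- for `v > N`, `x v` is solved from `D^[v - N] P = S * x v + (terms of order < v)`
  let F : ℕ → MvPolynomial ℕ K := fun v =>
    if v ≤ N then C (ψ (X v)) else C (ψ S)⁻¹ * map (ψ.comp C) (X v * S - D^[v - N] P)
  have hF : ∀ v, F v ∈ supported K (Iio v) := by
    intro v
    by_cases hv : v ≤ N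
    · simp only [F, if_pos hv]
      exact (supported K _).algebraMap_mem _
    obtain ⟨j, rfl⟩ : ∃ j, v = N + 1 + j := ⟨v - (N + 1), by omega⟩
    have hR := neg_mem (iterate_sub_X_mul_pderiv_mem_supported hDC hDX hP j)
    rw [neg_sub] at hR
    simp only [F, if_neg hv, show N + 1 + j - N = j + 1 by omega]
    exact mul_mem ((supported K _).algebraMap_mem _)
      (mem_supported.mpr ((Finset.coe_subset.mpr (vars_map _ _)).trans (mem_supported.mp hR)))
  set x := triangularSolution F
  have hx : ∀ v, x v = eval x (F v) := triangularSolution_eq hF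
  set e := eval₂Hom (ψ.comp C) x
  have he : ∀ q ∈ supported k (Iio (N + 1)), e q = ψ q := by
    intro q hq
    have hlow : EqOn x (fun i => ψ (X i)) (Iio (N + 1)) := fun i hi => by
      simp only [hx i, F, if_pos (Nat.le_of_lt_succ hi), eval_C]
    rw [coe_eval₂Hom, eval₂_eq_eval₂_of_mem_supported _ hq hlow, ← coe_eval₂Hom,
      ← map_eval₂Hom, coe_eval₂Hom, eval₂_eta]
  refine ⟨e, he, fun j => ?_⟩
  cases j with
  | zero => rw [Function.iterate_zero_apply, he P hP, hψP]
  | succ j =>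
    have hv : ¬ N + 1 + j ≤ N := by omega
    have hxv : ψ S * x (N + 1 + j) = e (X (N + 1 + j) * S - D^[j + 1] P) := by
      rw [hx]
      simp only [F, if_neg hv, show N + 1 + j - N = j + 1 by omega, eval_mul, eval_C, eval_map]
      field_simp
      rfl
    have hsplit : D^[j + 1] P = X (N + 1 + j) * S - (X (N + 1 + j) * S - D^[j + 1] P) := by ring
    rw [hsplit, map_sub, ← hxv, map_mul, he S (pderiv_mem_supported hP), eval₂Hom_X', mul_comm,
      sub_self]

theorem exists_ringHom_ker_eq_saturation [NoZeroDivisors k] [CharZero k] {N : ℕ}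
    {P : MvPolynomial ℕ k}
    (hP : P ∈ supported k (Iio (N + 1))) (hord : N ∈ P.vars) (hPprime : Prime P) :
    ∃ e : MvPolynomial ℕ k →+* FractionRing (MvPolynomial ℕ k ⧸ Ideal.span {P}),
      (∀ Q, Q ∈ RingHom.ker e ↔
        ∃ m : ℕ, pderiv N P ^ m * Q ∈ Ideal.span {R | ∃ j : ℕ, R = D^[j] P}) ∧
      ∀ q ∈ supported k (Iio (N + 1)), q ∈ RingHom.ker e ↔ P ∣ q := by
  have : (Ideal.span {P}).IsPrime := (Ideal.span_singleton_prime hPprime.ne_zero).mpr hPprime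
  set J := Ideal.span {R | ∃ j : ℕ, R = D^[j] P}
  have hJ : ∀ j, D^[j] P ∈ J := fun j => Ideal.subset_span ⟨j, rfl⟩
  let ψ := (algebraMap (MvPolynomial ℕ k ⧸ Ideal.span {P})
    (FractionRing (MvPolynomial ℕ k ⧸ Ideal.span {P}))).comp (Ideal.Quotient.mk _)
  have hψ : ∀ q, ψ q = 0 ↔ P ∣ q := fun q => by
    rw [RingHom.comp_apply, IsFractionRing.to_map_eq_zero_iff, Ideal.Quotient.eq_zero_iff_mem,
      Ideal.mem_span_singleton]
  have hψS : ψ (pderiv N P) ≠ 0 := mt (hψ _).mp (not_dvd_pderiv hord)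
  obtain ⟨e, he, heJ⟩ :=
    exists_ringHom_map_iterate_eq_zero hDC hDX hP ψ ((hψ P).mpr dvd_rfl) hψS
  have hlow : ∀ q ∈ supported k (Iio (N + 1)), q ∈ RingHom.ker e ↔ P ∣ q := fun q hq => by
    rw [RingHom.mem_ker, he q hq, hψ]
  refine ⟨e, e.mem_ker_iff_exists_pow_mul_mem (L := supported k (Iio (N + 1))) ?_ ?_ ?_ ?_,
    hlow⟩
  · exact Ideal.span_le.mpr (by rintro _ ⟨j, rfl⟩; exact heJ j)
  · rwa [he _ (pderiv_mem_supported hP)]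
  · exact fun b hb hb0 => J.mem_of_dvd ((hlow b hb).mp hb0) (hJ 0)
  · exact exists_pow_pderiv_mul_sub_mem hDC hDX hP hJ

end DifferentialPolynomial

theorem separant_saturation_is_prime_differential_ideal_general
    {k : Type*} [Field k] [CharZero k]
    (δ : k → k)
    (D : MvPolynomial ℕ k → MvPolynomial ℕ k)
    (hDadd : ∀ p q, D (p + q) = D p + D q)
    (hDmul : ∀ p q, D (p * q) = p * D q + q * D p)
    (hDC : ∀ a : k, D (C a) = C (δ a))
    (hDX : ∀ n : ℕ, D (X n) = X (n + 1))
    (P : MvPolynomial ℕ k) (hPirr : Irreducible P)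
    (N : ℕ) (hord : N ∈ P.vars) (hordmax : ∀ m ∈ P.vars, m ≤ N) :
    ∃ I : Ideal (MvPolynomial ℕ k),
      (I : Set (MvPolynomial ℕ k)) =
        {Q | ∃ m : ℕ, (pderiv N P) ^ m * Q ∈ Ideal.span {R | ∃ j : ℕ, R = D^[j] P}} ∧
      I.IsPrime ∧
      (∀ Q ∈ I, D Q ∈ I) ∧
      P ∈ I ∧
      (∀ Q ∈ I, (∀ m ∈ Q.vars, m < N) → Q = 0) ∧
      (∀ Q ∈ I, N ∈ Q.vars → (∀ m ∈ Q.vars, m ≤ N) → P ∣ Q) := by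
  let d : Derivation ℤ (MvPolynomial ℕ k) (MvPolynomial ℕ k) :=
    Derivation.mk' (AddMonoidHom.mk' D hDadd).toIntLinearMap hDmul
  have hlow : ∀ Q : MvPolynomial ℕ k, (∀ m ∈ Q.vars, m ≤ N) →
      Q ∈ supported k (Set.Iio (N + 1)) := fun Q hQ =>
    mem_supported.mpr fun i hi => Nat.lt_succ_of_le (hQ i hi)
  -- makes `FractionRing (k{x} ⧸ (P))` a field, so that `ker e` is prime
  have : (Ideal.span {P}).IsPrime := (Ideal.span_singleton_prime hPirr.ne_zero).mpr hPirr.prime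
  obtain ⟨e, hker, hdvd⟩ := exists_ringHom_ker_eq_saturation (D := d) hDC hDX (hlow P hordmax)
    hord hPirr.prime
  have hJd : ∀ a ∈ Ideal.span {R | ∃ j : ℕ, R = D^[j] P},
      d a ∈ Ideal.span {R | ∃ j : ℕ, R = D^[j] P} := fun a =>
    d.map_mem_span_of_forall_mem <| by
      rintro _ ⟨j, rfl⟩
      exact ⟨j + 1, (Function.iterate_succ_apply' D j P).symm⟩
  refine ⟨RingHom.ker e, Set.ext hker, RingHom.ker_isPrime e, fun Q hQ => ?_,
    (hdvd P (hlow P hordmax)).mpr dvd_rfl, fun Q hQ hQN => ?_,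
    fun Q hQ _ hQN => (hdvd Q (hlow Q hQN)).mp hQ⟩
  · obtain ⟨m, hm⟩ := (hker Q).mp hQ
    exact (hker _).mpr ⟨m + 1, d.pow_succ_mul_map_mem hJd hm⟩
  · exact eq_zero_of_dvd_of_notMem_vars hord (fun h => lt_irrefl N (hQN N h))
      ((hdvd Q (hlow Q fun m hm => (hQN m hm).le)).mp hQ)

/-- For an irreducible differential polynomial `P` of order `N ≥ 0` in the
differential polynomial ring `k{x}` (modelled as `MvPolynomial ℕ k`, where the variable `n`
stands for `x^(n)`, with derivation `D` extending the derivation `δ` of `k` and sending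
`x^(n)` to `x^(n+1)`), the set
`I(P) = {Q | ∃ m, S_P ^ m * Q ∈ ⟨P⟩}` (where `S_P = ∂P/∂x^(N)` is the separant and `⟨P⟩`
is the smallest differential ideal containing `P`, i.e. the ideal spanned by the iterated
derivatives of `P`) is a prime differential ideal containing `P`, containing no nonzero
element of order `< N`, and every element of it of order `N` is a multiple of `P`. -/
theorem separant_saturation_is_prime_differential_ideal
    {k : Type*} [Field k] [CharZero k]
    (δ : k → k)
    (hδadd : ∀ x y, δ (x + y) = δ x + δ y)
    (hδmul : ∀ x y, δ (x * y) = x * δ y + y * δ x)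
    (D : MvPolynomial ℕ k → MvPolynomial ℕ k)
    (hDadd : ∀ p q, D (p + q) = D p + D q)
    (hDmul : ∀ p q, D (p * q) = p * D q + q * D p)
    (hDC : ∀ a : k, D (C a) = C (δ a))
    (hDX : ∀ n : ℕ, D (X n) = X (n + 1))
    (P : MvPolynomial ℕ k) (hPirr : Irreducible P)
    (N : ℕ) (hord : N ∈ P.vars) (hordmax : ∀ m ∈ P.vars, m ≤ N) :
    ∃ I : Ideal (MvPolynomial ℕ k),
      (I : Set (MvPolynomial ℕ k)) =
        {Q | ∃ m : ℕ, (pderiv N P) ^ m * Q ∈ Ideal.span {R | ∃ j : ℕ, R = D^[j] P}} ∧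
      I.IsPrime ∧
      (∀ Q ∈ I, D Q ∈ I) ∧
      P ∈ I ∧
      (∀ Q ∈ I, (∀ m ∈ Q.vars, m < N) → Q = 0) ∧
      (∀ Q ∈ I, N ∈ Q.vars → (∀ m ∈ Q.vars, m ≤ N) → P ∣ Q) :=
  separant_saturation_is_prime_differential_ideal_general δ D hDadd hDmul hDC hDX P hPirr N hord
    hordmax
end

section
/- Let K be a differential field of characteristic zero with field of constants C. Elements y₁, …, yₙ of K are linearly dependent over C if and only if their Wronskian W(y₁,…,yₙ) is zero. -/
/-! If `c` is a nonzero vector of constants with `∑ cⱼ yⱼ = 0`, differentiating this relation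
`i` times shows that `c` is in the kernel of the Wronsky matrix. Conversely, argue by induction
on `n`. If the Wronskian of `y₁, …, yₙ₊₁` vanishes but that of `y₁, …, yₙ` does not, take a kernel
vector `c` of the Wronsky matrix; it has `cₙ₊₁ ≠ 0`, so normalise `cₙ₊₁ = 1`. Differentiating
the `i`-th row relation and subtracting the `(i+1)`-st gives `∑ⱼ yⱼ⁽ⁱ⁾ δcⱼ = 0` for `i < n`, and
`δcₙ₊₁ = 0`; as the smaller Wronsky matrix is nonsingular, all `δcⱼ` vanish.
-/

open Matrix

namespace Derivation

variable {A R : Type*} [CommRing A] [CommRing R] [Algebra A R]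

def wronskMatrix (D : Derivation A R R) (m : ℕ) {ι : Type*} (y : ι → R) :
    Matrix (Fin m) ι R :=
  Matrix.of fun i j => D^[i] (y j)

variable (D : Derivation A R R) {ι : Type*} [Fintype ι]

theorem map_sum_mul (f c : ι → R) :
    D (∑ j, f j * c j) = ∑ j, D (f j) * c j + ∑ j, f j * D (c j) := by
  simp only [map_sum, leibniz, smul_eq_mul, ← Finset.sum_add_distrib]
  exact Finset.sum_congr rfl fun j _ => by ring

theorem iterate_sum_mul_of_map_eq_zero {c : ι → R} (hc : ∀ j, D (c j) = 0) (f : ι → R)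
    (k : ℕ) : D^[k] (∑ j, f j * c j) = ∑ j, D^[k] (f j) * c j := by
  induction k with
  | zero => rfl
  | succ k ih =>
    simp only [Function.iterate_succ_apply', ih, map_sum_mul, hc, mul_zero,
      Finset.sum_const_zero, add_zero]

theorem wronskMatrix_mulVec_eq_zero_of_map_eq_zero {y c : ι → R} (hc : ∀ j, D (c j) = 0)
    (hyc : ∑ j, y j * c j = 0) (m : ℕ) : wronskMatrix D m y *ᵥ c = 0 := by
  ext i
  simp [mulVec, dotProduct, wronskMatrix, ← iterate_sum_mul_of_map_eq_zero D hc, hyc,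
    Function.iterate_fixed D.map_zero]

theorem wronskMatrix_mulVec_map_eq_zero {m : ℕ} {y c : ι → R}
    (h : wronskMatrix D (m + 1) y *ᵥ c = 0) : wronskMatrix D m y *ᵥ (fun j => D (c j)) = 0 := by
  ext i
  have hi := congrFun h i.castSucc
  have hi' := congrFun h i.succ
  simp only [mulVec, dotProduct, wronskMatrix, of_apply, Fin.val_castSucc, Fin.val_succ,
    Pi.zero_apply, Function.iterate_succ_apply'] at hi hi' ⊢
  have := congrArg D hi
  rwa [map_sum_mul, hi', zero_add, map_zero] at this

theorem wronskMatrix_mulVec_eq_zero_of_succ {m : ℕ} {y c : ι → R}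
    (h : wronskMatrix D (m + 1) y *ᵥ c = 0) : wronskMatrix D m y *ᵥ c = 0 :=
  funext fun i => congrFun h i.castSucc

theorem det_wronskMatrix_eq_zero [IsDomain R] {n : ℕ} {y c : Fin n → R}
    (hc : ∀ j, D (c j) = 0) (hc0 : c ≠ 0) (hyc : ∑ j, y j * c j = 0) :
    (wronskMatrix D n y).det = 0 :=
  exists_mulVec_eq_zero_iff.mp ⟨c, hc0, wronskMatrix_mulVec_eq_zero_of_map_eq_zero D hc hyc n⟩

theorem eq_zero_of_wronskMatrix_mulVec_eq_zero_of_last_eq_zero [NoZeroDivisors R] {n : ℕ}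
    {y v : Fin (n + 1) → R}
    (hW : (wronskMatrix D n (Fin.init y)).det ≠ 0) (hv : wronskMatrix D n y *ᵥ v = 0)
    (hlast : v (Fin.last n) = 0) : v = 0 := by
  have hinit : wronskMatrix D n (Fin.init y) *ᵥ Fin.init v = 0 := by
    ext i
    simpa [mulVec, dotProduct, Fin.sum_univ_castSucc, hlast, wronskMatrix, Fin.init] using
      congrFun hv i
  have := eq_zero_of_mulVec_eq_zero hW hinit
  ext j
  induction j using Fin.lastCases with
  | last => exact hlast
  | cast j => exact congrFun this j

section Field

variable {K : Type*} [Field K] [Algebra A K] (D : Derivation A K K)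

theorem exists_map_eq_zero_of_det_wronskMatrix_init_ne_zero {n : ℕ} {y : Fin (n + 1) → K}
    (hW : (wronskMatrix D n (Fin.init y)).det ≠ 0) (hW' : (wronskMatrix D (n + 1) y).det = 0) :
    ∃ c : Fin (n + 1) → K, (∀ i, D (c i) = 0) ∧ c ≠ 0 ∧ ∑ i, y i * c i = 0 := by
  obtain ⟨v, hv0, hv⟩ := exists_mulVec_eq_zero_iff.mpr hW'
  have hvlast : v (Fin.last n) ≠ 0 := fun hlast =>
    hv0 <| eq_zero_of_wronskMatrix_mulVec_eq_zero_of_last_eq_zero D hW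
      (wronskMatrix_mulVec_eq_zero_of_succ D hv) hlast
  set c := (v (Fin.last n))⁻¹ • v
  have hc : wronskMatrix D (n + 1) y *ᵥ c = 0 := by rw [mulVec_smul, hv, smul_zero]
  have hclast : c (Fin.last n) = 1 := inv_mul_cancel₀ hvlast
  have hDc : (fun j => D (c j)) = 0 :=
    eq_zero_of_wronskMatrix_mulVec_eq_zero_of_last_eq_zero D hW
      (wronskMatrix_mulVec_map_eq_zero D hc) (by simp [hclast])
  refine ⟨c, congrFun hDc, fun h => one_ne_zero (hclast.symm.trans (congrFun h _)), ?_⟩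
  simpa [mulVec, dotProduct, wronskMatrix] using congrFun hc 0

theorem exists_map_eq_zero_of_det_wronskMatrix_eq_zero :
    ∀ {n : ℕ} {y : Fin n → K}, (wronskMatrix D n y).det = 0 →
      ∃ c : Fin n → K, (∀ i, D (c i) = 0) ∧ c ≠ 0 ∧ ∑ i, y i * c i = 0
  | 0, _, h => by simp at h
  | n + 1, y, h => by
    by_cases hW : (wronskMatrix D n (Fin.init y)).det = 0
    · obtain ⟨c, hc, hc0, hyc⟩ := exists_map_eq_zero_of_det_wronskMatrix_eq_zero hW
      refine ⟨Fin.snoc c 0, Fin.lastCases (by simp) (by simpa using hc), ?_, ?_⟩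
      · exact fun h => hc0 <| funext fun j => by simpa using congrFun h j.castSucc
      · simpa [Fin.sum_univ_castSucc, Fin.init] using hyc
    · exact exists_map_eq_zero_of_det_wronskMatrix_init_ne_zero D hW h

theorem exists_map_eq_zero_iff_det_wronskMatrix_eq_zero {n : ℕ} (y : Fin n → K) :
    (∃ c : Fin n → K, (∀ i, D (c i) = 0) ∧ c ≠ 0 ∧ ∑ i, c i * y i = 0) ↔
      (wronskMatrix D n y).det = 0 := by
  simp_rw [mul_comm _ (y _)]
  exact ⟨fun ⟨_, hc, hc0, hyc⟩ => det_wronskMatrix_eq_zero D hc hc0 hyc,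
    exists_map_eq_zero_of_det_wronskMatrix_eq_zero D⟩

end Field

end Derivation

theorem linearDependent_over_constants_iff_wronskian_eq_zero_general
    {K : Type*} [Field K]
    (δ : K → K)
    (hadd : ∀ x y, δ (x + y) = δ x + δ y)
    (hmul : ∀ x y, δ (x * y) = x * δ y + y * δ x)
    (n : ℕ) (y : Fin n → K) :
    (∃ c : Fin n → K, (∀ i, δ (c i) = 0) ∧ c ≠ 0 ∧ ∑ i, c i * y i = 0) ↔
      Matrix.det (Matrix.of fun i j : Fin n => δ^[(i : ℕ)] (y j)) = 0 :=
  let D : Derivation ℤ K K := .mk' (AddMonoidHom.mk' δ hadd).toIntLinearMap hmul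
  D.exists_map_eq_zero_iff_det_wronskMatrix_eq_zero y

/-- In a differential field `K` of characteristic zero with derivation `δ`
and field of constants `C = {c | δ c = 0}`, elements `y₁, …, yₙ` are linearly dependent
over `C` if and only if their Wronskian (the determinant of the matrix whose `(i,j)`
entry is the `(i-1)`-st derivative of `y_j`) vanishes. -/
theorem linearDependent_over_constants_iff_wronskian_eq_zero
    {K : Type*} [Field K] [CharZero K]
    (δ : K → K)
    (hadd : ∀ x y, δ (x + y) = δ x + δ y)
    (hmul : ∀ x y, δ (x * y) = x * δ y + y * δ x)
    (n : ℕ) (y : Fin n → K) :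
    (∃ c : Fin n → K, (∀ i, δ (c i) = 0) ∧ c ≠ 0 ∧ ∑ i, c i * y i = 0) ↔
      Matrix.det (Matrix.of fun i j : Fin n => δ^[(i : ℕ)] (y j)) = 0 :=
  linearDependent_over_constants_iff_wronskian_eq_zero_general δ hadd hmul n y
end

section
/- Let K be a differential field of characteristic zero with field of constants C, and let u be an element of a differential field extension of K with u' = a ∈ K, where a is not a derivative in K (there is no b ∈ K with b' = a). Then u is transcendental over K; moreover, if K(u) has the same field of constants as K, then the differential Galois group of K(u)/K is isomorphic to the additive group (C, +) of the constants of K. -/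
/-- The differential Galois group of a differential field extension `ι : K →+* M`
(with derivation `δM` on `M`): the group of field automorphisms of `M` fixing the image
of `K` pointwise and commuting with the derivation. -/
def diffGaloisGroup {K M : Type*} [Field K] [Field M] (ι : K →+* M) (δM : M → M) :
    Subgroup (RingAut M) where
  carrier := {σ | (∀ c : K, σ (ι c) = ι c) ∧ ∀ x : M, σ (δM x) = δM (σ x)}
  one_mem' := ⟨fun _ => rfl, fun _ => rfl⟩
  mul_mem' := by
    rintro σ τ ⟨hσ1, hσ2⟩ ⟨hτ1, hτ2⟩
    refine ⟨fun c => ?_, fun x => ?_⟩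
    · show σ (τ (ι c)) = ι c
      rw [hτ1, hσ1]
    · show σ (τ (δM x)) = δM (σ (τ x))
      rw [hτ2, hσ2]
  inv_mem' := by
    rintro σ ⟨h1, h2⟩
    refine ⟨fun c => ?_, fun x => ?_⟩
    · exact σ.injective (by
        show σ (σ.symm (ι c)) = σ (ι c)
        rw [RingEquiv.apply_symm_apply, h1])
    · exact σ.injective (by
        show σ (σ.symm (δM x)) = σ (δM (σ.symm x))
        rw [RingEquiv.apply_symm_apply, h2, RingEquiv.apply_symm_apply])

/-- The additive group of constants of a differential field `(K, δ)`. -/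
def constantsAddSubgroup {K : Type*} [Field K] (δ : K → K)
    (hadd : ∀ x y, δ (x + y) = δ x + δ y) : AddSubgroup K where
  carrier := {x | δ x = 0}
  zero_mem' := by
    have h := hadd 0 0
    rw [add_zero] at h
    exact (left_eq_add.mp h)
  add_mem' := by
    intro a b ha hb
    show δ (a + b) = 0
    rw [hadd, ha, hb, add_zero]
  neg_mem' := by
    intro a ha
    have h0 : δ 0 = 0 := by
      have h := hadd 0 0
      rw [add_zero] at h
      exact (left_eq_add.mp h)
    have h := hadd a (-a)
    rw [add_neg_cancel, h0, ha, zero_add] at h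
    exact h.symm

/-!
Differentiating the minimal polynomial relation `p(u) = 0`, with `p` monic of degree `n`, gives a
polynomial relation of smaller degree, which must therefore be trivial; its coefficient of degree
`n - 1` reads `(p_{n-1})′ + n a = 0`, exhibiting `a` as the derivative of `-p_{n-1}/n`. So `u` is
transcendental and `K(u) ≅ K(X)`. For a constant `c` the substitution `X ↦ X + c` then gives an
automorphism `u ↦ u + c`, commuting with the derivation because it does so on the generators.
Conversely a differential automorphism `σ` moves `u` by the constant `σ u - u`, which lies in `K`
since `K(u)` has no new constants, and `σ` is determined by `σ u`.
-/

open Polynomial IntermediateField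
open scoped Differential

def Derivation.ofAddLeibniz {A : Type*} [CommRing A] (δ : A → A)
    (hadd : ∀ x y, δ (x + y) = δ x + δ y) (hmul : ∀ x y, δ (x * y) = x * δ y + y * δ x) :
    Derivation ℤ A A :=
  Derivation.mk' (AddMonoidHom.mk' δ hadd).toIntLinearMap hmul

section Transcendence

variable {K : Type*} [Field K] [Differential K]

theorem Polynomial.Monic.degree_mapCoeffs_lt {p : K[X]} (hp : p.Monic) :
    (Differential.mapCoeffs p).degree < p.degree := by
  rw [degree_eq_natDegree hp.ne_zero, degree_lt_iff_coeff_zero]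
  intro m hm
  rw [Differential.coeff_mapCoeffs]
  rcases hm.eq_or_lt with heq | hlt
  · rw [← heq, hp.coeff_natDegree, Derivation.map_one_eq_zero]
  · rw [coeff_eq_zero_of_natDegree_lt hlt, map_zero]

theorem transcendental_of_deriv_eq_algebraMap [CharZero K] {R : Type*} [CommRing R]
    [Nontrivial R] [Differential R] [Algebra K R] [DifferentialAlgebra K R] {u : R} {a : K}
    (hu : u′ = algebraMap K R a) (ha : ¬∃ b : K, b′ = a) : Transcendental K u := by
  intro halg
  set p := minpoly K u
  have hp : p.Monic := minpoly.monic halg.isIntegral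
  obtain ⟨m, hm⟩ : ∃ m, p.natDegree = m + 1 :=
    Nat.exists_eq_add_one.2 (minpoly.natDegree_pos halg.isIntegral)
  set q := Differential.mapCoeffs p + a • derivative p
  have hqu : aeval u q = 0 := by
    have := Differential.deriv_aeval_eq u p
    rw [minpoly.aeval, map_zero, hu] at this
    simpa [q, Algebra.smul_def, mul_comm] using this.symm
  have hq : q = 0 := by
    by_contra hq
    refine (minpoly.degree_le_of_ne_zero K u hq hqu).not_gt ?_
    refine (degree_add_le _ _).trans_lt (max_lt hp.degree_mapCoeffs_lt ?_)
    exact (degree_smul_le _ _).trans_lt (degree_derivative_lt hp.ne_zero)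
  have hcoeff : (p.coeff m)′ + a * (m + 1) = 0 := by
    simpa [q, coeff_derivative, ← hm, hp.coeff_natDegree] using congrArg (coeff · m) hq
  refine ha ⟨-(p.coeff m) / (m + 1), ?_⟩
  rw [Derivation.leibniz_div_const _ _ _ (by exact_mod_cast Derivation.map_natCast _ (m + 1))]
  have hm1 : (m + 1 : K) ≠ 0 := by exact_mod_cast m.succ_ne_zero
  rw [map_neg, smul_eq_mul, eq_neg_of_add_eq_zero_left hcoeff]
  field_simp

end Transcendence

section Translation

variable {K M : Type*} [Field K] [Field M] [Algebra K M] {u : M}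

noncomputable def ratFuncEquivOfAdjoinEqTop (hu : Transcendental K u) (hgen : K⟮u⟯ = ⊤) :
    RatFunc K ≃ₐ[K] M :=
  (RatFunc.algEquivOfTranscendental u hu).trans ((equivOfEq hgen).trans topEquiv)

@[simp]
theorem ratFuncEquivOfAdjoinEqTop_X (hu : Transcendental K u) (hgen : K⟮u⟯ = ⊤) :
    ratFuncEquivOfAdjoinEqTop hu hgen RatFunc.X = u := by
  simp [ratFuncEquivOfAdjoinEqTop]

noncomputable def RatFunc.translate (c : K) : RatFunc K ≃ₐ[K] RatFunc K :=
  IsFractionRing.algEquivOfAlgEquiv (algEquivAevalXAddC c)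

@[simp]
theorem RatFunc.translate_X (c : K) :
    RatFunc.translate c RatFunc.X = RatFunc.X + RatFunc.C c := by
  simp [RatFunc.translate, ← RatFunc.algebraMap_X, algEquivAevalXAddC]

noncomputable def translateOfAdjoinEqTop (hu : Transcendental K u) (hgen : K⟮u⟯ = ⊤) (c : K) :
    M ≃ₐ[K] M :=
  (ratFuncEquivOfAdjoinEqTop hu hgen).symm.trans
    ((RatFunc.translate c).trans (ratFuncEquivOfAdjoinEqTop hu hgen))

@[simp]
theorem translateOfAdjoinEqTop_apply_self (hu : Transcendental K u) (hgen : K⟮u⟯ = ⊤) (c : K) :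
    translateOfAdjoinEqTop hu hgen c u = u + algebraMap K M c := by
  have hX : (ratFuncEquivOfAdjoinEqTop hu hgen).symm u = RatFunc.X := by
    rw [AlgEquiv.symm_apply_eq, ratFuncEquivOfAdjoinEqTop_X]
  simp [translateOfAdjoinEqTop, hX, ← RatFunc.algebraMap_eq_C]

end Translation

namespace Differential

variable {M : Type*} [Field M] [Differential M] {F : Type*} [FunLike F M M] [RingHomClass F M M]

def commSubfield (σ : F) : Subfield M where
  carrier := {x | σ x′ = (σ x)′}
  zero_mem' := by simp
  one_mem' := by simp
  add_mem' {x y} hx hy := by simp_all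
  neg_mem' {x} hx := by simp_all
  mul_mem' {x y} hx hy := by simp_all [Derivation.leibniz]
  inv_mem' x hx := by simp_all [Derivation.leibniz_inv]

theorem map_deriv_of_closure_eq_top {σ : F} {s : Set M} (hs : Subfield.closure s = ⊤)
    (h : ∀ x ∈ s, σ x′ = (σ x)′) (x : M) : σ x′ = (σ x)′ := by
  have hle : Subfield.closure s ≤ commSubfield σ := Subfield.closure_le.mpr h
  exact hle (hs ▸ Subfield.mem_top x)

end Differential

section Galois

variable {K M : Type*} [Field K] [Field M] [Algebra K M] {u : M}

theorem closure_range_union_eq_top_of_adjoin_simple_eq_top (hgen : K⟮u⟯ = ⊤) :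
    Subfield.closure (Set.range (algebraMap K M) ∪ {u}) = ⊤ := by
  rw [← adjoin_toSubfield, hgen, top_toSubfield]

theorem diffGaloisGroup_ext {δ : M → M} (hgen : K⟮u⟯ = ⊤)
    {σ τ : diffGaloisGroup (algebraMap K M) δ} (h : (σ : RingAut M) u = (τ : RingAut M) u) :
    σ = τ := by
  refine Subtype.ext (RingEquiv.toRingHom_injective (RingHom.eq_of_eqOn_of_field_closure_eq_top
    (closure_range_union_eq_top_of_adjoin_simple_eq_top hgen) ?_))
  rintro x (⟨k, rfl⟩ | rfl)
  · exact (σ.2.1 k).trans (τ.2.1 k).symm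
  · exact h

variable [Differential K] [Differential M] [DifferentialAlgebra K M] {a : K}

local notation "𝒢" => diffGaloisGroup (algebraMap K M) (Differential.deriv : Derivation ℤ M M)
local notation "𝒞" => constantsAddSubgroup (Differential.deriv : Derivation ℤ K K) (map_add _)

theorem translateOfAdjoinEqTop_mem_diffGaloisGroup (hu : u′ = algebraMap K M a)
    (htr : Transcendental K u) (hgen : K⟮u⟯ = ⊤) {c : K} (hc : c′ = 0) :
    (translateOfAdjoinEqTop htr hgen c).toRingEquiv ∈ 𝒢 := by
  refine ⟨(translateOfAdjoinEqTop htr hgen c).commutes, Differential.map_deriv_of_closure_eq_top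
    (closure_range_union_eq_top_of_adjoin_simple_eq_top hgen) ?_⟩
  rintro x (⟨k, rfl⟩ | rfl)
  · simp [deriv_algebraMap]
  · simp [hu, deriv_algebraMap, hc]

noncomputable def translationHom (hu : u′ = algebraMap K M a) (htr : Transcendental K u)
    (hgen : K⟮u⟯ = ⊤) : Multiplicative 𝒞 →* 𝒢 where
  toFun c := ⟨(translateOfAdjoinEqTop htr hgen c.toAdd).toRingEquiv,
    translateOfAdjoinEqTop_mem_diffGaloisGroup hu htr hgen c.toAdd.2⟩
  map_one' := diffGaloisGroup_ext hgen (by simp)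
  map_mul' c d := diffGaloisGroup_ext hgen (by simp [add_assoc])

theorem translationHom_apply_self (hu : u′ = algebraMap K M a) (htr : Transcendental K u)
    (hgen : K⟮u⟯ = ⊤) (c : Multiplicative 𝒞) :
    (translationHom hu htr hgen c : RingAut M) u = u + algebraMap K M c.toAdd :=
  translateOfAdjoinEqTop_apply_self htr hgen _

theorem translationHom_injective (hu : u′ = algebraMap K M a) (htr : Transcendental K u)
    (hgen : K⟮u⟯ = ⊤) : Function.Injective (translationHom hu htr hgen) := by
  intro c d h
  have := congrArg (fun σ : 𝒢 => (σ : RingAut M) u) h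
  simp only [translationHom_apply_self, add_right_inj] at this
  exact Multiplicative.toAdd.injective (Subtype.ext ((algebraMap K M).injective this))

theorem translationHom_surjective [Differential.ContainConstants K M]
    (hu : u′ = algebraMap K M a) (htr : Transcendental K u) (hgen : K⟮u⟯ = ⊤) :
    Function.Surjective (translationHom hu htr hgen) := by
  intro σ
  have hconst : ((σ : RingAut M) u - u)′ = 0 := by
    rw [map_sub, ← σ.2.2, hu, σ.2.1, sub_self]
  obtain ⟨c, hc⟩ := mem_range_of_deriv_eq_zero K hconst
  have hc' : c′ = 0 :=
    (algebraMap K M).injective (by rw [← deriv_algebraMap, hc, hconst, map_zero])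
  exact ⟨.ofAdd ⟨c, hc'⟩, diffGaloisGroup_ext hgen (by simp [translationHom_apply_self, hc])⟩

noncomputable def translationEquiv [Differential.ContainConstants K M]
    (hu : u′ = algebraMap K M a) (htr : Transcendental K u) (hgen : K⟮u⟯ = ⊤) :
    Multiplicative 𝒞 ≃* 𝒢 :=
  MulEquiv.ofBijective (translationHom hu htr hgen)
    ⟨translationHom_injective hu htr hgen, translationHom_surjective hu htr hgen⟩

end Galois

/-- Let `K` be a differential field of characteristic zero with field of
constants `C`, and let `u` be an element of a differential field extension `M` of `K`
with `u' = a ∈ K`, where `a` is not a derivative in `K`. Then `u` is transcendental over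
`K`; moreover if `M = K(u)` has the same field of constants as `K`, then the differential
Galois group of `K(u)/K` is isomorphic to the additive group `(C, +)` of constants
of `K`. -/
theorem adjoin_integral_transcendental_and_galois_group_eq_additive_constants
    {K M : Type*} [Field K] [CharZero K] [Field M]
    (δK : K → K)
    (hKadd : ∀ x y, δK (x + y) = δK x + δK y)
    (hKmul : ∀ x y, δK (x * y) = x * δK y + y * δK x)
    (ι : K →+* M) (δM : M → M)
    (hMadd : ∀ x y, δM (x + y) = δM x + δM y)
    (hMmul : ∀ x y, δM (x * y) = x * δM y + y * δM x)
    (hcompat : ∀ c : K, δM (ι c) = ι (δK c))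
    (a : K) (u : M)
    (hu : δM u = ι a)
    (hnotderiv : ¬∃ b : K, δK b = a)
    (hgen : Subfield.closure (Set.range ι ∪ {u}) = ⊤) :
    (∀ p : Polynomial K, p ≠ 0 → Polynomial.eval₂ ι u p ≠ 0) ∧
    ((∀ z : M, δM z = 0 → ∃ c : K, δK c = 0 ∧ ι c = z) →
      Nonempty (diffGaloisGroup ι δM ≃* Multiplicative (constantsAddSubgroup δK hKadd))) := by
  let _ : Algebra K M := ι.toAlgebra
  let _ : Differential K := ⟨.ofAddLeibniz δK hKadd hKmul⟩
  let _ : Differential M := ⟨.ofAddLeibniz δM hMadd hMmul⟩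
  have _ : DifferentialAlgebra K M := ⟨hcompat⟩
  have htr : Transcendental K u := transcendental_of_deriv_eq_algebraMap hu hnotderiv
  refine ⟨fun p hp hpu => htr ⟨p, hp, hpu⟩, fun hconst => ?_⟩
  have _ : Differential.ContainConstants K M :=
    ⟨fun {z} hz => let ⟨c, _, hc⟩ := hconst z hz; ⟨c, hc⟩⟩
  have hadjoin : K⟮u⟯ = ⊤ := toSubfield_injective (hgen.trans top_toSubfield.symm)
  exact ⟨(translationEquiv hu htr hadjoin).symm⟩
end

section
/- Let K be a differential field of characteristic zero with field of constants C, let a ∈ K, and let u ≠ 0 be an element of a differential field extension of K satisfying u' = a u; assume K(u) has the same field of constants as K. Suppose n ≥ 1 is the least positive integer such that the equation y' = n a y has a nonzero solution β ∈ K. Then u is algebraic over K, its minimal polynomial over K is X^n − cβ for some nonzero constant c, and the differential Galois group of K(u)/K is isomorphic to the group of n-th roots of unity in C. -/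
/-- The group of `n`-th roots of unity lying in the field of constants `C` of a
differential field `(K, δ)`, as a subgroup of `Kˣ`. -/
def rootsOfUnityConstants {K : Type*} [Field K] (δ : K → K)
    (hadd : ∀ x y, δ (x + y) = δ x + δ y)
    (hmul : ∀ x y, δ (x * y) = x * δ y + y * δ x) (n : ℕ) : Subgroup Kˣ where
  carrier := {x | δ (x : K) = 0 ∧ (x : K) ^ n = 1}
  one_mem' := by
    constructor
    · show δ ((1 : Kˣ) : K) = 0
      rw [Units.val_one]
      have h := hmul 1 1
      rw [mul_one, one_mul] at h
      exact left_eq_add.mp h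
    · rw [Units.val_one, one_pow]
  mul_mem' := by
    rintro a b ⟨ha, ha'⟩ ⟨hb, hb'⟩
    constructor
    · show δ ((a * b : Kˣ) : K) = 0
      rw [Units.val_mul, hmul, ha, hb, mul_zero, mul_zero, add_zero]
    · rw [Units.val_mul, mul_pow, ha', hb', mul_one]
  inv_mem' := by
    rintro a ⟨ha, ha'⟩
    constructor
    · show δ ((a⁻¹ : Kˣ) : K) = 0
      have h1 : δ (1 : K) = 0 := by
        have h := hmul 1 1
        rw [mul_one, one_mul] at h
        exact left_eq_add.mp h
      have h := hmul (a : K) ((a⁻¹ : Kˣ) : K)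
      rw [Units.mul_inv, h1, ha, mul_zero, add_zero] at h
      exact (mul_eq_zero.mp h.symm).resolve_left (Units.ne_zero a)
    · rw [Units.val_inv_eq_inv_val, inv_pow, ha', inv_one]

/-
Since `u ^ n` and `β` both solve `y′ = n a y`, their quotient is a constant `c ∈ K`, so `u` is a
root of `X ^ n - c β`. Let `p` be the minimal polynomial of `u`, of degree `d ≤ n`. Differentiating
`p(u) = 0` and subtracting `d a p(u)` yields a polynomial of degree `< d` vanishing at `u`, hence
zero; its constant coefficient says `γ′ = d a γ` for the constant term `γ ≠ 0` of `p`. Minimality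
of `n` gives `d = n`, so `p = X ^ n - c β`.

A differential automorphism `σ` sends `u` to another solution of `y′ = a y`, so `σ u / u` is a
constant `ζ ∈ K` with `ζ ^ n = 1`, and `σ` is determined by `ζ` because `u` generates. Conversely,
for such `ζ` the `K`-embedding `u ↦ ζ u` commutes with the derivation, because `ζ u` satisfies
the same equation `y′ = a y` as `u`.
-/

open Polynomial Differential

theorem diffGaloisGroup_ext_of_adjoin_eq_top {K M : Type*} [Field K] [Field M] [Algebra K M]
    {δ : M → M} {u : M} (hgen : Algebra.adjoin K {u} = ⊤)
    {σ τ : diffGaloisGroup (algebraMap K M) δ}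
    (h : (σ : RingAut M) u = (τ : RingAut M) u) : σ = τ := by
  have := AlgHom.ext_of_adjoin_eq_top hgen (φ₁ := (AlgEquiv.ofRingEquiv σ.2.1).toAlgHom)
    (φ₂ := (AlgEquiv.ofRingEquiv τ.2.1).toAlgHom) (by simpa using h)
  exact Subtype.ext (RingEquiv.ext fun x => DFunLike.congr_fun this x)

namespace Differential

abbrev ofLeibniz {R : Type*} [CommRing R] (δ : R → R)
    (hadd : ∀ x y, δ (x + y) = δ x + δ y) (hmul : ∀ x y, δ (x * y) = x * δ y + y * δ x) :
    Differential R :=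
  ⟨Derivation.mk' (AddMonoidHom.mk' δ hadd).toIntLinearMap hmul⟩

abbrev constRootsOfUnity (K : Type*) [Field K] [Differential K] (n : ℕ) :
    Subgroup Kˣ :=
  rootsOfUnityConstants (Differential.deriv : Derivation ℤ K K) (map_add _)
    (Derivation.leibniz _) n

theorem deriv_pow_of_deriv_eq_mul {R : Type*} [CommRing R] [Differential R]
    {x b : R} (h : x′ = b * x) (i : ℕ) : (x ^ i)′ = i * b * x ^ i := by
  rcases i with _ | i
  · simp
  · rw [Derivation.leibniz_pow, h, nsmul_eq_mul, smul_eq_mul, pow_succ]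
    push_cast
    ring

theorem deriv_div_eq_zero_of_deriv_eq_mul {F : Type*} [Field F] [Differential F]
    {x y b : F} (hx : x′ = b * x) (hy : y′ = b * y) : (x / y)′ = 0 := by
  rw [Derivation.leibniz_div, hx, hy, smul_eq_mul, smul_eq_mul, smul_eq_mul]
  ring

variable {K M : Type*} [Field K] [Field M] [Differential K] [Differential M] [Algebra K M]
  [DifferentialAlgebra K M]

variable (K) in
theorem exists_algebraMap_eq_of_deriv_eq_zero [ContainConstants K M] {x : M}
    (hx : x′ = 0) : ∃ c : K, c′ = 0 ∧ algebraMap K M c = x := by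
  obtain ⟨c, rfl⟩ := mem_range_of_deriv_eq_zero K hx
  refine ⟨c, (algebraMap K M).injective ?_, rfl⟩
  rw [← deriv_algebraMap, hx, map_zero]

theorem coeff_implicitDeriv_C_mul_X (a : K) (p : K[X]) (i : ℕ) :
    (implicitDeriv (C a * X) p).coeff i = (p.coeff i)′ + i * a * p.coeff i := by
  rcases i with _ | i
  · simp [implicitDeriv]
  · simp only [implicitDeriv, Derivation.coe_add, Derivation.coe_smul, Pi.add_apply,
      Pi.smul_apply, Derivation.restrictScalars_apply, derivative'_apply, smul_eq_mul, mul_assoc,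
      coeff_add, coeff_mapCoeffs, coeff_C_mul, coeff_X_mul, coeff_derivative, Nat.cast_add,
      Nat.cast_one, add_right_inj]
    ring

theorem deriv_coeff_minpoly {u : M} {a : K} (hint : IsIntegral K u)
    (hu : u′ = algebraMap K M a * u) (i : ℕ) :
    ((minpoly K u).coeff i)′ = ((minpoly K u).natDegree - i : K) * a * (minpoly K u).coeff i := by
  set p := minpoly K u
  -- `q(u) = (p(u))′ - d a p(u)`, and the leading terms cancel
  set q := implicitDeriv (C a * X) p - C (p.natDegree * a) * p
  have hcoeff (j : ℕ) : q.coeff j = (p.coeff j)′ + (j - p.natDegree : K) * a * p.coeff j := by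
    simp only [q, coeff_sub, coeff_implicitDeriv_C_mul_X, coeff_C_mul]
    ring
  have hq : aeval u q = 0 := by
    have hv : u′ = aeval u (C a * X) := by simp [hu]
    rw [map_sub, ← deriv_aeval_eq_implicitDeriv u _ hv, map_mul, minpoly.aeval, mul_zero,
      Derivation.map_zero, sub_zero]
  have hq0 : q = 0 := by
    by_contra hq0
    refine (minpoly.degree_le_of_ne_zero K u hq0 hq).not_gt ?_
    rw [degree_eq_natDegree (minpoly.ne_zero hint), degree_lt_iff_coeff_zero]
    intro j hj
    rcases (show p.natDegree ≤ j by exact_mod_cast hj).eq_or_lt with rfl | hlt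
    · simp [hcoeff, p, (minpoly.monic hint).leadingCoeff]
    · simp [hcoeff, coeff_eq_zero_of_natDegree_lt hlt]
  have := hcoeff i
  rw [hq0, coeff_zero] at this
  linear_combination -this

theorem le_natDegree_minpoly {u : M} {a : K} {n : ℕ} (hint : IsIntegral K u)
    (hu0 : u ≠ 0) (hu : u′ = algebraMap K M a * u)
    (hleast : ∀ m : ℕ, 1 ≤ m → m < n → ∀ γ : K, γ′ = m * a * γ → γ = 0) :
    n ≤ (minpoly K u).natDegree := by
  by_contra! hlt
  refine minpoly.coeff_zero_ne_zero hint hu0 (hleast _ (minpoly.natDegree_pos hint) hlt _ ?_)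
  simpa using deriv_coeff_minpoly hint hu 0

theorem minpoly_eq_X_pow_sub_C {u : M} {a b : K} {n : ℕ} (hn : n ≠ 0)
    (hu0 : u ≠ 0) (hu : u′ = algebraMap K M a * u) (hun : u ^ n = algebraMap K M b)
    (hleast : ∀ m : ℕ, 1 ≤ m → m < n → ∀ γ : K, γ′ = m * a * γ → γ = 0) :
    minpoly K u = X ^ n - C b := by
  have hroot : aeval u (X ^ n - C b) = 0 := by simp [hun]
  have hint : IsIntegral K u := .of_pow (Nat.pos_of_ne_zero hn) (hun ▸ isIntegral_algebraMap)
  refine (eq_of_monic_of_dvd_of_natDegree_le (minpoly.monic hint) (monic_X_pow_sub_C b hn)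
    (minpoly.dvd K u hroot) ?_).symm
  rw [natDegree_X_pow_sub_C]
  exact le_natDegree_minpoly hint hu0 hu hleast

theorem exists_pow_eq_algebraMap_const_mul [ContainConstants K M] {u : M} {a β : K}
    {n : ℕ} (hn : n ≠ 0) (hu0 : u ≠ 0) (hu : u′ = algebraMap K M a * u) (hβ0 : β ≠ 0)
    (hβ : β′ = n * a * β) :
    ∃ c : K, c′ = 0 ∧ c ≠ 0 ∧ u ^ n = algebraMap K M (c * β) := by
  have hβ' : (algebraMap K M β)′ = n * algebraMap K M a * algebraMap K M β := by
    simp [deriv_algebraMap, hβ]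
  obtain ⟨c, hc, hcu⟩ := exists_algebraMap_eq_of_deriv_eq_zero K
    (deriv_div_eq_zero_of_deriv_eq_mul (deriv_pow_of_deriv_eq_mul hu n) hβ')
  have hun : u ^ n = algebraMap K M (c * β) := by
    rw [map_mul, hcu, div_mul_cancel₀]
    simpa using hβ0
  refine ⟨c, hc, ?_, hun⟩
  rintro rfl
  simp [hu0, hn] at hun

theorem algHom_deriv_of_adjoin_eq_top {N : Type*} [CommRing N] [Differential N]
    [Algebra K N] [DifferentialAlgebra K N] (f : M →ₐ[K] N) {x : M} {v : K[X]}
    (hgen : Algebra.adjoin K {x} = ⊤) (hx : x′ = aeval x v) (hfx : (f x)′ = aeval (f x) v)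
    (y : M) : f y′ = (f y)′ := by
  obtain ⟨p, rfl⟩ : y ∈ Set.range (aeval (R := K) x) := by
    rw [← AlgHom.coe_range, ← Algebra.adjoin_singleton_eq_range_aeval, hgen]
    trivial
  rw [deriv_aeval_eq_implicitDeriv x v hx, ← aeval_algHom_apply, ← aeval_algHom_apply,
    deriv_aeval_eq_implicitDeriv _ v hfx]

theorem exists_constRootsOfUnity_apply_eq [ContainConstants K M] {u : M} {a b : K}
    {n : ℕ} (hu0 : u ≠ 0) (hu : u′ = algebraMap K M a * u) (hun : u ^ n = algebraMap K M b)
    {σ : RingAut M}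
    (hσ : σ ∈ diffGaloisGroup (algebraMap K M) (Differential.deriv : Derivation ℤ M M)) :
    ∃ ζ : constRootsOfUnity K n, σ u = algebraMap K M (ζ : Kˣ) * u := by
  obtain ⟨hfix, hcomm⟩ := hσ
  have hσu : (σ u)′ = algebraMap K M a * σ u := by rw [← hcomm, hu, map_mul, hfix]
  obtain ⟨z, hz, hzu⟩ :=
    exists_algebraMap_eq_of_deriv_eq_zero K (deriv_div_eq_zero_of_deriv_eq_mul hσu hu)
  have hσu' : σ u = algebraMap K M z * u := by rw [hzu, div_mul_cancel₀ _ hu0]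
  have hz0 : z ≠ 0 := by
    rintro rfl
    simp [hu0] at hσu'
  have hzn : z ^ n = 1 := by
    apply (algebraMap K M).injective
    have := congrArg σ hun
    rw [map_pow, hσu', hfix, mul_pow, ← map_pow, ← hun] at this
    rwa [mul_eq_right₀ (pow_ne_zero n hu0), ← map_one (algebraMap K M)] at this
  exact ⟨⟨Units.mk0 z hz0, hz, hzn⟩, hσu'⟩

theorem exists_mem_diffGaloisGroup_apply_eq {u y : M} {a : K}
    (hint : IsIntegral K u) (hgen : Algebra.adjoin K {u} = ⊤) (hu : u′ = algebraMap K M a * u)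
    (hy : aeval y (minpoly K u) = 0) (hy' : y′ = algebraMap K M a * y) :
    ∃ σ ∈ diffGaloisGroup (algebraMap K M) (Differential.deriv : Derivation ℤ M M), σ u = y := by
  let h := IsAdjoinRootMonic.mkOfAdjoinEqTop hint hgen
  have : Module.Finite K M := h.finite
  let f := h.liftHom y hy
  have hfu : f u = y :=
    (congrArg f (IsAdjoinRoot.mkOfAdjoinEqTop_root hint hgen).symm).trans (h.liftHom_root hy)
  let σ := AlgEquiv.ofBijective f f.bijective
  refine ⟨σ.toRingEquiv, ⟨σ.commutes, algHom_deriv_of_adjoin_eq_top f hgen (v := C a * X) ?_ ?_⟩,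
    hfu⟩
  · simp [hu]
  · simp [hfu, hy']

theorem nonempty_diffGaloisGroup_mulEquiv_constRootsOfUnity [ContainConstants K M]
    {u : M} {a b : K} {n : ℕ} (hint : IsIntegral K u) (hu0 : u ≠ 0)
    (hu : u′ = algebraMap K M a * u) (hgen : Algebra.adjoin K {u} = ⊤)
    (hmin : minpoly K u = X ^ n - C b) :
    Nonempty (diffGaloisGroup (algebraMap K M) (Differential.deriv : Derivation ℤ M M) ≃*
      constRootsOfUnity K n) := by
  have hun : u ^ n = algebraMap K M b := by
    simpa [hmin, sub_eq_zero] using minpoly.aeval K u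
  choose ζ hζ using
    fun σ : diffGaloisGroup (algebraMap K M) (Differential.deriv : Derivation ℤ M M) =>
      exists_constRootsOfUnity_apply_eq hu0 hu hun σ.2
  have hcancel {z z' : constRootsOfUnity K n}
      (h : algebraMap K M (z : Kˣ) * u = algebraMap K M (z' : Kˣ) * u) : z = z' :=
    Subtype.ext (Units.ext ((algebraMap K M).injective (mul_right_cancel₀ hu0 h)))
  refine ⟨MulEquiv.ofBijective (MonoidHom.mk' ζ fun σ τ => hcancel ?_)
    ⟨fun σ τ h => diffGaloisGroup_ext_of_adjoin_eq_top hgen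
      (by rw [hζ, hζ, show ζ σ = ζ τ from h]), fun z => ?_⟩⟩
  · rw [← hζ]
    show (σ : RingAut M) ((τ : RingAut M) u) = _
    rw [hζ τ, map_mul, σ.2.1, hζ σ]
    push_cast
    ring
  · have hroot : aeval (algebraMap K M (z : Kˣ) * u) (minpoly K u) = 0 := by
      rw [hmin, map_sub, map_pow, aeval_X, aeval_C, mul_pow, ← map_pow, z.2.2, map_one, one_mul,
        hun, sub_self]
    have hderiv :
        (algebraMap K M (z : Kˣ) * u)′ = algebraMap K M a * (algebraMap K M (z : Kˣ) * u) := by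
      rw [Derivation.leibniz, deriv_algebraMap, z.2.1, hu]
      simp only [map_zero, smul_eq_mul]
      ring
    obtain ⟨σ, hσ, hσu⟩ := exists_mem_diffGaloisGroup_apply_eq hint hgen hu hroot hderiv
    exact ⟨⟨σ, hσ⟩, hcancel ((hζ _).symm.trans hσu)⟩

end Differential

theorem adjoin_exponential_algebraic_galois_group_eq_rootsOfUnity_general
    {K M : Type*} [Field K] [Field M]
    (δK : K → K)
    (hKadd : ∀ x y, δK (x + y) = δK x + δK y)
    (hKmul : ∀ x y, δK (x * y) = x * δK y + y * δK x)
    (ι : K →+* M) (δM : M → M)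
    (hMadd : ∀ x y, δM (x + y) = δM x + δM y)
    (hMmul : ∀ x y, δM (x * y) = x * δM y + y * δM x)
    (hcompat : ∀ c : K, δM (ι c) = ι (δK c))
    (a : K) (u : M) (hu0 : u ≠ 0)
    (hu : δM u = ι a * u)
    (hgen : Subfield.closure (Set.range ι ∪ {u}) = ⊤)
    (hconst : ∀ z : M, δM z = 0 → ∃ c : K, δK c = 0 ∧ ι c = z)
    (n : ℕ) (hn : 1 ≤ n) (β : K) (hβ0 : β ≠ 0) (hβ : δK β = (n : K) * a * β)
    (hleast : ∀ m : ℕ, 1 ≤ m → m < n → ∀ γ : K, δK γ = (m : K) * a * γ → γ = 0) :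
    (∃ c : K, δK c = 0 ∧ c ≠ 0 ∧
      u ^ n = ι (c * β) ∧
      (∀ p : Polynomial K, p ≠ 0 → Polynomial.eval₂ ι u p = 0 →
        (Polynomial.X ^ n - Polynomial.C (c * β)) ∣ p)) ∧
    Nonempty (diffGaloisGroup ι δM ≃* rootsOfUnityConstants δK hKadd hKmul n) := by
  let : Differential K := .ofLeibniz δK hKadd hKmul
  let : Differential M := .ofLeibniz δM hMadd hMmul
  let : Algebra K M := ι.toAlgebra
  have : DifferentialAlgebra K M := ⟨hcompat⟩
  have : ContainConstants K M := ⟨fun {z} hz => (hconst z hz).imp fun _ hc => hc.2⟩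
  have hn0 : n ≠ 0 := Nat.one_le_iff_ne_zero.mp hn
  obtain ⟨c, hc, hc0, hun⟩ := exists_pow_eq_algebraMap_const_mul hn0 hu0 hu hβ0 hβ
  have hmin : minpoly K u = X ^ n - C (c * β) := minpoly_eq_X_pow_sub_C hn0 hu0 hu hun hleast
  have hint : IsIntegral K u := .of_pow (Nat.pos_of_ne_zero hn0) (hun ▸ isIntegral_algebraMap)
  have hgen' : Algebra.adjoin K {u} = ⊤ :=
    Algebra.adjoin_eq_top_of_primitive_element hint.isAlgebraic
      (IntermediateField.toSubfield_injective hgen)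
  exact ⟨⟨c, hc, hc0, hun, fun p _ hp => hmin ▸ minpoly.dvd K u hp⟩,
    nonempty_diffGaloisGroup_mulEquiv_constRootsOfUnity hint hu0 hu hgen' hmin⟩

/-- Let `K` be a differential field of characteristic zero, `a ∈ K`, and
`u ≠ 0` an element of a differential field extension `M = K(u)` of `K` with `u' = a u`
and the same field of constants as `K`. Suppose `n ≥ 1` is the least positive integer
such that `y' = n a y` has a nonzero solution `β ∈ K`. Then `u` is algebraic over `K`,
its minimal polynomial over `K` is `X ^ n - C (c * β)` for some nonzero constant `c`,
and the differential Galois group of `K(u)/K` is isomorphic to the group of `n`-th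
roots of unity in the constants of `K`. -/
theorem adjoin_exponential_algebraic_galois_group_eq_rootsOfUnity
    {K M : Type*} [Field K] [CharZero K] [Field M]
    (δK : K → K)
    (hKadd : ∀ x y, δK (x + y) = δK x + δK y)
    (hKmul : ∀ x y, δK (x * y) = x * δK y + y * δK x)
    (ι : K →+* M) (δM : M → M)
    (hMadd : ∀ x y, δM (x + y) = δM x + δM y)
    (hMmul : ∀ x y, δM (x * y) = x * δM y + y * δM x)
    (hcompat : ∀ c : K, δM (ι c) = ι (δK c))
    (a : K) (u : M) (hu0 : u ≠ 0)
    (hu : δM u = ι a * u)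
    (hgen : Subfield.closure (Set.range ι ∪ {u}) = ⊤)
    (hconst : ∀ z : M, δM z = 0 → ∃ c : K, δK c = 0 ∧ ι c = z)
    (n : ℕ) (hn : 1 ≤ n) (β : K) (hβ0 : β ≠ 0) (hβ : δK β = (n : K) * a * β)
    (hleast : ∀ m : ℕ, 1 ≤ m → m < n → ∀ γ : K, δK γ = (m : K) * a * γ → γ = 0) :
    (∃ c : K, δK c = 0 ∧ c ≠ 0 ∧
      u ^ n = ι (c * β) ∧
      (∀ p : Polynomial K, p ≠ 0 → Polynomial.eval₂ ι u p = 0 →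
        (Polynomial.X ^ n - Polynomial.C (c * β)) ∣ p)) ∧
    Nonempty (diffGaloisGroup ι δM ≃* rootsOfUnityConstants δK hKadd hKmul n) :=
  adjoin_exponential_algebraic_galois_group_eq_rootsOfUnity_general δK hKadd hKmul ι δM hMadd hMmul
    hcompat a u hu0 hu hgen hconst n hn β hβ0 hβ hleast
end

section
/- Let K be a differential field of characteristic zero with field of constants C, and let M = K(u₁,…,uₙ) be a Picard–Vessiot extension of K with fundamental system of solutions (u₁,…,uₙ) of a linear homogeneous differential equation of order n over K. Every differential K-automorphism σ of M satisfies σ(u_i) = Σ_j c_{ij} u_j for a unique invertible matrix (c_{ij}) with entries in C, and the resulting injective group homomorphism from the differential Galois group G(M/K) into GL_n(C) identifies G(M/K) with an algebraic matrix group over C: there exists a set S of polynomials in n² variables with coefficients in C such that an invertible matrix (c_{ij}) ∈ GL_n(C) arises from a differential K-automorphism of M if and only if every polynomial in S vanishes at (c_{ij}). -/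
/-!
Every solution of the equation is a linear combination of `u` with constant coefficients,
because the Wronskian matrix `W` is invertible; a differential automorphism `σ` maps solutions to
solutions, which gives its matrix `c`, and `σ` acts on `W` by `W ↦ W cᵀ`.

Let `P ⊆ K[X]` be the ideal of algebraic relations over `K` among the entries of `W`. If `c` comes
from `σ`, then the substitution `X ↦ X cᵀ` maps `P` into `P`. Conversely, if an invertible constant
matrix `c` has this property, Noetherianity of `K[X]` upgrades the inclusion to an equality, so the
substitution induces an automorphism of `K[X]/P ≅ K[W]`, hence of its fraction field `M`; it
commutes with the derivation since it does so on the generators `ι K ∪ u`.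

The condition is the vanishing of `p(W Yᵀ) ∈ M[Y]` at the constant point `Y = c` for every
`p ∈ P`. Expanding the coefficients of these polynomials in a basis of `M` over the constants of
`K` turns it into polynomial equations in `c` with constant coefficients.
-/

open Matrix

theorem OrderIso.apply_eq_self_of_le_apply {α : Type*} [PartialOrder α] [WellFoundedGT α]
    (g : α ≃o α) {x : α} (h : x ≤ g x) : g x = x := by
  obtain ⟨N, hN⟩ := WellFoundedGT.monotone_chain_condition
    ⟨fun k => g^[k] x, monotone_nat_of_le_succ fun k => by
      rw [Function.iterate_succ_apply]; exact g.monotone.iterate k h⟩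
  have hstab : g^[N] (g x) = g^[N] x := by
    rw [← Function.iterate_succ_apply]; exact (hN (N + 1) N.le_succ).symm
  exact g.injective.iterate N hstab

theorem RingHom.exists_ringEquiv_apply_eq {A M : Type*} [CommRing A] [Field M] (g : A →+* M)
    (hg : Subfield.closure (Set.range g) = ⊤) (e : A ≃+* A)
    (he : (RingHom.ker g).comap e = RingHom.ker g) :
    ∃ σ : M ≃+* M, ∀ a, σ (g a) = g (e a) := by
  have : IsFractionRing g.range M := IsFractionRing.of_field _ _ fun z => by
    obtain ⟨x, hx, y, hy, rfl⟩ := Subfield.mem_closure_iff.mp (hg ▸ Subfield.mem_top z)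
    rw [← RingHom.coe_range, Subring.closure_eq] at hx hy
    exact ⟨⟨x, hx⟩, ⟨y, hy⟩, rfl⟩
  have hmap : RingHom.ker g = (RingHom.ker g).map e := by
    conv_rhs => rw [← he]
    exact (Ideal.map_comap_of_surjective _ e.surjective _).symm
  let φ : g.range ≃+* g.range := (g.quotientKerEquivRange.symm.trans
    (Ideal.quotientEquiv _ _ e hmap)).trans g.quotientKerEquivRange
  have hφ (a : A) : φ (g.rangeRestrict a) = g.rangeRestrict (e a) := by
    have hmk (b : A) : g.quotientKerEquivRange (Ideal.Quotient.mk _ b) = g.rangeRestrict b := rfl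
    simp only [φ, RingEquiv.trans_apply, ← hmk, RingEquiv.symm_apply_apply]
    rfl
  refine ⟨IsFractionRing.ringEquivOfRingEquiv φ, fun a => ?_⟩
  exact (IsFractionRing.ringEquivOfRingEquiv_algebraMap φ (g.rangeRestrict a)).trans
    (congrArg Subtype.val (hφ a))

namespace MvPolynomial

section MatrixSubst

variable {R : Type*} [CommRing R] {n : ℕ}

/-- `X ↦ X cᵀ`: if `σ (u i) = ∑ j, c i j * u j`, then `σ` acts on the Wronskian matrix `W` by
`W ↦ W cᵀ`. -/
noncomputable def matrixSubst (c : Matrix (Fin n) (Fin n) R) :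
    MvPolynomial (Fin n × Fin n) R →ₐ[R] MvPolynomial (Fin n × Fin n) R :=
  aeval fun q => ∑ j, C (c q.2 j) * X (q.1, j)

@[simp]
theorem matrixSubst_X (c : Matrix (Fin n) (Fin n) R) (q : Fin n × Fin n) :
    matrixSubst c (X q) = ∑ j, C (c q.2 j) * X (q.1, j) :=
  aeval_X _ _

theorem matrixSubst_comp (c d : Matrix (Fin n) (Fin n) R) :
    (matrixSubst c).comp (matrixSubst d) = matrixSubst (d * c) := by
  ext q
  simp only [AlgHom.comp_apply, matrixSubst_X, map_sum, map_mul, algHom_C, mul_apply,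
    Finset.mul_sum, Finset.sum_mul, algebraMap_eq]
  rw [Finset.sum_comm]
  simp only [mul_assoc]

theorem matrixSubst_one : matrixSubst (1 : Matrix (Fin n) (Fin n) R) = AlgHom.id R _ := by
  ext q
  simp [one_apply]

noncomputable def matrixSubstEquiv (c : Matrix (Fin n) (Fin n) R) (hc : IsUnit c.det) :
    MvPolynomial (Fin n × Fin n) R ≃ₐ[R] MvPolynomial (Fin n × Fin n) R :=
  AlgEquiv.ofAlgHom (matrixSubst c) (matrixSubst c⁻¹)
    (by rw [matrixSubst_comp, nonsing_inv_mul _ hc, matrixSubst_one])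
    (by rw [matrixSubst_comp, mul_nonsing_inv _ hc, matrixSubst_one])

end MatrixSubst

section Descent

variable {F L σ ι : Type*} [Field F] [CommRing L] [Algebra F L]

noncomputable def basisCoord (b : Module.Basis ι F L) (i : ι) (p : MvPolynomial σ L) :
    MvPolynomial σ F :=
  ∑ m ∈ p.support, monomial m (b.repr (p.coeff m) i)

theorem eval_basisCoord (b : Module.Basis ι F L) (i : ι) (p : MvPolynomial σ L) (x : σ → F) :
    eval x (basisCoord b i p) = b.repr (eval (algebraMap F L ∘ x) p) i := by
  rw [basisCoord, map_sum, eval_eq, map_sum, Finsupp.finsetSum_apply]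
  refine Finset.sum_congr rfl fun m _ => ?_
  rw [eval_monomial, Finsupp.prod, Function.comp_def]
  simp only [← map_pow, ← map_prod]
  rw [mul_comm (coeff m p), ← Algebra.smul_def, map_smul, Finsupp.smul_apply, smul_eq_mul,
    mul_comm]

theorem exists_forall_eval_algebraMap_eq_zero_iff (T : Set (MvPolynomial σ L)) :
    ∃ Q : Set (MvPolynomial σ F), ∀ x : σ → F,
      (∀ p ∈ T, eval (algebraMap F L ∘ x) p = 0) ↔ ∀ q ∈ Q, eval x q = 0 := by
  let b := Module.Basis.ofVectorSpace F L
  refine ⟨{q | ∃ p ∈ T, ∃ i, q = basisCoord b i p}, fun x => ?_⟩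
  simp only [Set.mem_ofPred_eq, forall_exists_index, and_imp]
  constructor
  · rintro h _ p hp i rfl
    simp [eval_basisCoord, h p hp]
  · intro h p hp
    refine b.repr.map_eq_zero_iff.mp (Finsupp.ext fun i => ?_)
    rw [← eval_basisCoord, h _ p hp i rfl, Finsupp.zero_apply]

end Descent

end MvPolynomial

theorem eq_sum_mul_of_forall_lt {M ι : Type*} [CommRing M] [Fintype ι] {n : ℕ} (b : Fin n → M)
    {Y : ℕ → M} {Z : ι → ℕ → M} (d : ι → M) (hY : Y n + ∑ m, b m * Y (n - 1 - m) = 0)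
    (hZ : ∀ j, Z j n + ∑ m, b m * Z j (n - 1 - m) = 0) (h : ∀ k < n, Y k = ∑ j, d j * Z j k) :
    Y n = ∑ j, d j * Z j n := by
  have hlt (m : Fin n) : n - 1 - m < n := by omega
  calc Y n = -∑ m, b m * ∑ j, d j * Z j (n - 1 - m) := by
        simp only [← h _ (hlt _)]; exact eq_neg_of_add_eq_zero_left hY
    _ = ∑ j, d j * -∑ m, b m * Z j (n - 1 - m) := by
        simp only [Finset.mul_sum, mul_neg, ← Finset.sum_neg_distrib]
        rw [Finset.sum_comm]
        exact Finset.sum_congr rfl fun _ _ => Finset.sum_congr rfl fun _ _ => by ring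
    _ = ∑ j, d j * Z j n := by simp only [← eq_neg_of_add_eq_zero_left (hZ _)]

namespace Derivation

section CommRing

variable {M : Type*} [CommRing M] (D : Derivation ℤ M M)

theorem iterate_sum_mul_of_map_eq_zero_s10 {ι : Type*} (s : Finset ι) {e : ι → M}
    (he : ∀ j, D (e j) = 0) (x : ι → M) (k : ℕ) :
    D^[k] (∑ j ∈ s, e j * x j) = ∑ j ∈ s, e j * D^[k] (x j) := by
  induction k with
  | zero => rfl
  | succ k ih =>
    simp only [Function.iterate_succ_apply', ih, map_sum, leibniz, he, smul_eq_mul, mul_zero,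
      add_zero]

end CommRing

section Field

variable {M : Type*} [Field M] (D : Derivation ℤ M M)

def constants : Subfield M where
  carrier := {x | D x = 0}
  mul_mem' {x y} hx hy := by simp_all [leibniz]
  one_mem' := D.map_one_eq_zero
  add_mem' {x y} hx hy := by simp_all
  zero_mem' := D.map_zero
  neg_mem' {x} hx := by simp_all
  inv_mem' x hx := by simp_all [leibniz_inv]

@[simp]
theorem mem_constants {x : M} : x ∈ D.constants ↔ D x = 0 := Iff.rfl

theorem commute_of_mem_closure (σ : M →+* M) {s : Set M} (hs : ∀ x ∈ s, σ (D x) = D (σ x))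
    {x : M} (hx : x ∈ Subfield.closure s) : σ (D x) = D (σ x) := by
  induction hx using Subfield.closure_induction with
  | mem x hx => exact hs x hx
  | one => simp
  | add x y _ _ hx hy => simp [hx, hy]
  | neg x _ hx => simp [hx]
  | mul x y _ _ hx hy => simp [leibniz, hx, hy]
  | inv x _ hx => simp [leibniz_inv, hx]

variable {n : ℕ}

def wronskianMatrix (u : Fin n → M) : Matrix (Fin n) (Fin n) M := Matrix.of fun k j => D^[k] (u j)

variable {D} {u : Fin n → M} (hW : (D.wronskianMatrix u).det ≠ 0)
include hW

theorem exists_constants_eq_sum_of_solution (b : Fin n → M)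
    (hu : ∀ i, D^[n] (u i) + ∑ m, b m * D^[n - 1 - m] (u i) = 0) {y : M}
    (hy : D^[n] y + ∑ m, b m * D^[n - 1 - m] y = 0) :
    ∃ d : Fin n → M, (∀ j, D (d j) = 0) ∧ y = ∑ j, d j * u j := by
  set W := D.wronskianMatrix u
  set d := W⁻¹ *ᵥ fun k : Fin n => D^[k] y
  -- Differentiating `W d = (y, y', …)` and using the same identity one order higher
  -- gives `W d' = 0`.
  have hWd : W *ᵥ d = fun k : Fin n => D^[k] y := by
    simp [d, Matrix.mulVec_mulVec, Matrix.mul_nonsing_inv _ hW.isUnit]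
  have hrel : ∀ k ≤ n, D^[k] y = ∑ j, d j * D^[k] (u j) := by
    have hlt : ∀ k < n, D^[k] y = ∑ j, d j * D^[k] (u j) := fun k hk => by
      simpa [Matrix.mulVec, dotProduct, W, wronskianMatrix, mul_comm] using
        (congrFun hWd ⟨k, hk⟩).symm
    intro k hk
    rcases hk.lt_or_eq with hk | rfl
    · exact hlt k hk
    · exact eq_sum_mul_of_forall_lt b d hy hu hlt
  have hd : (fun j => D (d j)) = 0 := by
    refine Matrix.eq_zero_of_mulVec_eq_zero hW (funext fun k => ?_)
    have h := congrArg D (hrel k k.isLt.le)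
    rw [← Function.iterate_succ_apply' D, hrel (k + 1) k.isLt, map_sum] at h
    simp only [leibniz, smul_eq_mul, Finset.sum_add_distrib, ← Function.iterate_succ_apply' D]
      at h
    simpa [Matrix.mulVec, dotProduct, W, wronskianMatrix] using h
  exact ⟨d, fun j => congrFun hd j, by simpa using hrel 0 n.zero_le⟩

theorem eq_zero_of_sum_mul_eq_zero {e : Fin n → M} (he : ∀ j, D (e j) = 0)
    (h : ∑ j, e j * u j = 0) : e = 0 := by
  refine Matrix.eq_zero_of_mulVec_eq_zero hW (funext fun k => ?_)
  have := D.iterate_sum_mul_of_map_eq_zero_s10 Finset.univ he u k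
  simp_all [Matrix.mulVec, dotProduct, wronskianMatrix, mul_comm, Function.iterate_fixed]

end Field

end Derivation

section DifferentialAutomorphism

variable {K M : Type*} [Field K] [Field M] {ι : K →+* M} {D : Derivation ℤ M M} {δK : K → K}
  {n : ℕ} {a : Fin n → K} {u : Fin n → M}

theorem map_solution_of_commute {σ : M ≃+* M} (hσι : ∀ z, σ (ι z) = ι z)
    (hσD : Function.Commute σ D)
    {y : M} (hy : D^[n] y + ∑ m, ι (a m) * D^[n - 1 - m] y = 0) :
    D^[n] (σ y) + ∑ m, ι (a m) * D^[n - 1 - m] (σ y) = 0 := by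
  simpa [hσι, hσD.iterate_right _ _] using congrArg σ hy

theorem exists_matrix_of_commute (hW : (D.wronskianMatrix u).det ≠ 0)
    (hsol : ∀ i, D^[n] (u i) + ∑ m, ι (a m) * D^[n - 1 - m] (u i) = 0)
    (hconst : ∀ z, D z = 0 → ∃ c, δK c = 0 ∧ ι c = z)
    {σ : M ≃+* M} (hσι : ∀ z, σ (ι z) = ι z) (hσD : Function.Commute σ D) :
    ∃ c : Matrix (Fin n) (Fin n) K, (∀ i j, δK (c i j) = 0) ∧ c.det ≠ 0 ∧
      ∀ i, σ (u i) = ∑ j, ι (c i j) * u j := by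
  choose d hdD hd using fun i =>
    D.exists_constants_eq_sum_of_solution hW _ hsol (map_solution_of_commute hσι hσD (hsol i))
  obtain ⟨c, hc, hcd⟩ : ∃ c : Matrix (Fin n) (Fin n) K, (∀ i j, δK (c i j) = 0) ∧
      ∀ i j, ι (c i j) = d i j := by
    choose c hc hcd using fun i j => hconst (d i j) (hdD i j)
    exact ⟨c, hc, hcd⟩
  have hσu : ∀ i, σ (u i) = ∑ j, ι (c i j) * u j := by simpa [hcd] using hd
  refine ⟨c, hc, fun hc0 => hW ?_, hσu⟩
  have hmap : σ.mapMatrix (D.wronskianMatrix u) = D.wronskianMatrix u * (ι.mapMatrix c)ᵀ := by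
    ext k i
    have hιc (j) : D (ι (c i j)) = 0 := by rw [hcd]; exact hdD i j
    simp only [Derivation.wronskianMatrix, RingEquiv.mapMatrix_apply, map_apply, of_apply,
      mul_apply, transpose_apply, RingHom.mapMatrix_apply]
    rw [hσD.iterate_right k (u i), hσu, D.iterate_sum_mul_of_map_eq_zero_s10 _ hιc]
    simp only [mul_comm]
  have hdet := σ.map_det (D.wronskianMatrix u)
  rw [hmap, det_mul, det_transpose, ← RingHom.map_det, hc0, map_zero, mul_zero] at hdet
  simpa using hdet

theorem matrix_eq_of_sum_mul_eq (hcompat : ∀ c, D (ι c) = ι (δK c))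
    (hW : (D.wronskianMatrix u).det ≠ 0) {c c' : Matrix (Fin n) (Fin n) K}
    (hc : ∀ i j, δK (c i j) = 0) (hc' : ∀ i j, δK (c' i j) = 0)
    (h : ∀ i, ∑ j, ι (c i j) * u j = ∑ j, ι (c' i j) * u j) : c = c' := by
  ext i j
  have hdiff := D.eq_zero_of_sum_mul_eq_zero hW (e := fun j => ι (c i j) - ι (c' i j))
    (fun j => by simp [hcompat, hc, hc']) (by simp [sub_mul, h i])
  exact ι.injective (sub_eq_zero.mp (congrFun hdiff j))

end DifferentialAutomorphism

section WronskianPolynomials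

open MvPolynomial

variable {K M : Type*} [Field K] [Field M] (ι : K →+* M) (D : Derivation ℤ M M) {n : ℕ}
  (u : Fin n → M)

noncomputable def wronskianEval : MvPolynomial (Fin n × Fin n) K →+* M :=
  eval₂Hom ι fun q => D.wronskianMatrix u q.1 q.2

/-- `p ↦ p(W Yᵀ)` for the Wronskian matrix `W` and a matrix of new variables `Y` -/
noncomputable def wronskianTwist :
    MvPolynomial (Fin n × Fin n) K →+* MvPolynomial (Fin n × Fin n) M :=
  eval₂Hom (C.comp ι) fun q => ∑ j, C (D.wronskianMatrix u q.1 j) * X (q.2, j)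

@[simp]
theorem wronskianEval_C (z : K) : wronskianEval ι D u (C z) = ι z :=
  eval₂Hom_C _ _ _

@[simp]
theorem wronskianEval_X (q : Fin n × Fin n) :
    wronskianEval ι D u (X q) = D^[q.1] (u q.2) :=
  eval₂Hom_X' _ _ _

theorem eval_wronskianTwist (c : Matrix (Fin n) (Fin n) K) (p : MvPolynomial (Fin n × Fin n) K) :
    eval (fun q => ι (c q.1 q.2)) (wronskianTwist ι D u p) =
      wronskianEval ι D u (matrixSubst c p) := by
  change ((eval _).comp (wronskianTwist ι D u)) p =
    ((wronskianEval ι D u).comp (matrixSubst c).toRingHom) p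
  congr 1
  ext q
  · simp [wronskianTwist]
  · simp [wronskianTwist, Derivation.wronskianMatrix, mul_comm]

variable {ι D u} {δK : K → K} {a : Fin n → K}

theorem map_wronskianEval {σ : M ≃+* M} (hσι : ∀ z, σ (ι z) = ι z) (hσD : Function.Commute σ D)
    {c : Matrix (Fin n) (Fin n) K} (hc : ∀ i j, D (ι (c i j)) = 0)
    (hσu : ∀ i, σ (u i) = ∑ j, ι (c i j) * u j) (p : MvPolynomial (Fin n × Fin n) K) :
    σ (wronskianEval ι D u p) = wronskianEval ι D u (matrixSubst c p) := by
  change ((σ : M →+* M).comp (wronskianEval ι D u)) p =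
    ((wronskianEval ι D u).comp (matrixSubst c).toRingHom) p
  congr 1
  ext q
  · simp [hσι]
  · simp [hσD.iterate_right _ (u q.2), hσu, D.iterate_sum_mul_of_map_eq_zero_s10 _ (hc q.2)]

theorem commute_of_map_wronskianEval (hcompat : ∀ z, D (ι z) = ι (δK z))
    (hsol : ∀ i, D^[n] (u i) + ∑ m, ι (a m) * D^[n - 1 - m] (u i) = 0)
    (hgen : Subfield.closure (Set.range ι ∪ Set.range u) = ⊤)
    {c : Matrix (Fin n) (Fin n) K} (hc : ∀ i j, D (ι (c i j)) = 0) {σ : M ≃+* M}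
    (hσ : ∀ p, σ (wronskianEval ι D u p) = wronskianEval ι D u (matrixSubst c p)) :
    (∀ z, σ (ι z) = ι z) ∧ Function.Commute σ D ∧ ∀ i, σ (u i) = ∑ j, ι (c i j) * u j := by
  have hσι (z : K) : σ (ι z) = ι z := by simpa using hσ (C z)
  have hlt (i : Fin n) : ∀ k < n, σ (D^[k] (u i)) = ∑ j, ι (c i j) * D^[k] (u j) := fun k hk => by
    simpa using hσ (X (⟨k, hk⟩, i))
  have hσu (i : Fin n) : σ (u i) = ∑ j, ι (c i j) * u j := by simpa using hlt i 0 i.pos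
  have hσDu (i : Fin n) : σ (D (u i)) = ∑ j, ι (c i j) * D (u j) := by
    rcases (Nat.one_le_iff_ne_zero.mpr i.pos.ne').lt_or_eq with h1 | h1
    · exact hlt i 1 h1
    · -- for `n = 1`, `D (u i)` is not an entry of `W`, so use the equation
      subst h1
      refine eq_sum_mul_of_forall_lt (fun m => ι (a m)) (Y := fun k => σ (D^[k] (u i)))
        (Z := fun j k => D^[k] (u j)) _ ?_ hsol (hlt i)
      simpa [hσι] using congrArg σ (hsol i)
  refine ⟨hσι, fun x => D.commute_of_mem_closure σ ?_ (hgen ▸ Subfield.mem_top x), hσu⟩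
  rintro _ (⟨z, rfl⟩ | ⟨i, rfl⟩)
  · simp [hcompat, hσι]
  · change σ (D (u i)) = D (σ (u i))
    rw [hσDu, hσu, map_sum]
    simp [Derivation.leibniz, hc]

theorem exists_ringEquiv_iff_le_comap_matrixSubst (hcompat : ∀ z, D (ι z) = ι (δK z))
    (hsol : ∀ i, D^[n] (u i) + ∑ m, ι (a m) * D^[n - 1 - m] (u i) = 0)
    (hgen : Subfield.closure (Set.range ι ∪ Set.range u) = ⊤)
    {c : Matrix (Fin n) (Fin n) K} (hc : ∀ i j, δK (c i j) = 0) (hdet : c.det ≠ 0) :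
    (∃ σ : M ≃+* M, (∀ z, σ (ι z) = ι z) ∧ (∀ x, σ (D x) = D (σ x)) ∧
        ∀ i, σ (u i) = ∑ j, ι (c i j) * u j) ↔
      RingHom.ker (wronskianEval ι D u) ≤
        (RingHom.ker (wronskianEval ι D u)).comap (matrixSubst c) := by
  have hc' (i j : Fin n) : D (ι (c i j)) = 0 := by simp [hcompat, hc]
  constructor
  · rintro ⟨σ, hσι, hσD, hσu⟩ p hp
    simp [RingHom.mem_ker, ← map_wronskianEval hσι hσD hc' hσu, (RingHom.mem_ker).mp hp]
  · intro hle
    let e := (matrixSubstEquiv c hdet.isUnit).toRingEquiv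
    have he : (RingHom.ker (wronskianEval ι D u)).comap e = RingHom.ker (wronskianEval ι D u) :=
      e.idealComapOrderIso.apply_eq_self_of_le_apply hle
    have hclosure : Subfield.closure (Set.range (wronskianEval ι D u)) = ⊤ := by
      refine top_le_iff.mp (hgen ▸ Subfield.closure_le.mpr ?_)
      rintro _ (⟨z, rfl⟩ | ⟨i, rfl⟩)
      · exact Subfield.subset_closure ⟨C z, wronskianEval_C ι D u z⟩
      · exact Subfield.subset_closure ⟨X (⟨0, i.pos⟩, i), wronskianEval_X ι D u _⟩
    obtain ⟨σ, hσ⟩ := (wronskianEval ι D u).exists_ringEquiv_apply_eq hclosure e he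
    obtain ⟨hσι, hσD, hσu⟩ := commute_of_map_wronskianEval hcompat hsol hgen hc' hσ
    exact ⟨σ, hσι, hσD, hσu⟩

end WronskianPolynomials

section AlgebraicGroup

open MvPolynomial

variable {K M : Type*} [Field K] [Field M] {ι : K →+* M} {D : Derivation ℤ M M} {δK : K → K}
  {n : ℕ} {a : Fin n → K} {u : Fin n → M}

theorem exists_set_eval_eq_zero_iff_exists_ringEquiv (hcompat : ∀ z, D (ι z) = ι (δK z))
    (hsol : ∀ i, D^[n] (u i) + ∑ m, ι (a m) * D^[n - 1 - m] (u i) = 0)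
    (hgen : Subfield.closure (Set.range ι ∪ Set.range u) = ⊤) :
    ∃ S : Set (MvPolynomial (Fin n × Fin n) K), (∀ p ∈ S, ∀ m, δK (p.coeff m) = 0) ∧
      ∀ c : Matrix (Fin n) (Fin n) K, (∀ i j, δK (c i j) = 0) → c.det ≠ 0 →
        ((∃ σ : M ≃+* M, (∀ z, σ (ι z) = ι z) ∧ (∀ x, σ (D x) = D (σ x)) ∧
            ∀ i, σ (u i) = ∑ j, ι (c i j) * u j) ↔
          ∀ p ∈ S, eval (fun q => c q.1 q.2) p = 0) := by
  let k : Subfield K := D.constants.comap ι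
  have hk {z : K} : z ∈ k ↔ δK z = 0 := by simp [k, hcompat]
  let _ : Algebra k M := (ι.comp k.subtype).toAlgebra
  obtain ⟨Q, hQ⟩ := exists_forall_eval_algebraMap_eq_zero_iff (F := k)
    (wronskianTwist ι D u '' RingHom.ker (wronskianEval ι D u))
  refine ⟨map k.subtype '' Q, ?_, fun c hc hdet => ?_⟩
  · rintro _ ⟨q, -, rfl⟩ m
    rw [coeff_map]
    exact hk.mp (q.coeff m).2
  let x : Fin n × Fin n → k := fun q => ⟨c q.1 q.2, hk.mpr (hc _ _)⟩
  calc _ ↔ ∀ p ∈ RingHom.ker (wronskianEval ι D u), wronskianEval ι D u (matrixSubst c p) = 0 :=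
        exists_ringEquiv_iff_le_comap_matrixSubst hcompat hsol hgen hc hdet
    _ ↔ ∀ F ∈ wronskianTwist ι D u '' RingHom.ker (wronskianEval ι D u),
          eval (algebraMap k M ∘ x) F = 0 := by
        simp only [Set.forall_mem_image]
        exact forall₂_congr fun p _ => by rw [← eval_wronskianTwist]; rfl
    _ ↔ ∀ q ∈ Q, eval x q = 0 := hQ x
    _ ↔ ∀ p ∈ map k.subtype '' Q, eval (fun q => c q.1 q.2) p = 0 := by
        simp only [Set.forall_mem_image, eval_map]
        refine forall₂_congr fun q _ => ?_
        have hq : eval₂ k.subtype (fun q => c q.1 q.2) q = k.subtype (eval x q) :=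
          (eval₂_comp_left k.subtype (RingHom.id k) x q).symm
        rw [hq, map_eq_zero_iff _ k.subtype_injective]

end AlgebraicGroup

theorem differential_galois_group_is_algebraic_matrix_group_general
    {K M : Type*} [Field K] [Field M]
    (δK : K → K)
    (ι : K →+* M) (δM : M → M)
    (hMadd : ∀ x y, δM (x + y) = δM x + δM y)
    (hMmul : ∀ x y, δM (x * y) = x * δM y + y * δM x)
    (hcompat : ∀ c : K, δM (ι c) = ι (δK c))
    (n : ℕ) (a : Fin n → K) (u : Fin n → M)
    (hsol : ∀ i, δM^[n] (u i) + ∑ j : Fin n, ι (a j) * δM^[n - 1 - (j : ℕ)] (u i) = 0)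
    (hwronskian : Matrix.det (Matrix.of fun i j : Fin n => δM^[(i : ℕ)] (u j)) ≠ 0)
    (hgen : Subfield.closure (Set.range ι ∪ Set.range u) = ⊤)
    (hconst : ∀ z : M, δM z = 0 → ∃ c : K, δK c = 0 ∧ ι c = z) :
    (∀ σ : M ≃+* M, (∀ c : K, σ (ι c) = ι c) → (∀ x : M, σ (δM x) = δM (σ x)) →
      ∃! c : Matrix (Fin n) (Fin n) K,
        (∀ i j, δK (c i j) = 0) ∧ c.det ≠ 0 ∧
          ∀ i, σ (u i) = ∑ j : Fin n, ι (c i j) * u j) ∧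
    (∀ σ τ : M ≃+* M,
      (∀ c : K, σ (ι c) = ι c) → (∀ x : M, σ (δM x) = δM (σ x)) →
      (∀ c : K, τ (ι c) = ι c) → (∀ x : M, τ (δM x) = δM (τ x)) →
      (∀ i, σ (u i) = τ (u i)) → σ = τ) ∧
    (∃ S : Set (MvPolynomial (Fin n × Fin n) K),
      (∀ p ∈ S, ∀ m, δK (MvPolynomial.coeff m p) = 0) ∧
      ∀ c : Matrix (Fin n) (Fin n) K, (∀ i j, δK (c i j) = 0) → c.det ≠ 0 →
        ((∃ σ : M ≃+* M, (∀ z : K, σ (ι z) = ι z) ∧ (∀ x : M, σ (δM x) = δM (σ x)) ∧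
            ∀ i, σ (u i) = ∑ j : Fin n, ι (c i j) * u j) ↔
          ∀ p ∈ S, MvPolynomial.eval (fun q : Fin n × Fin n => c q.1 q.2) p = 0)) := by
  obtain ⟨D, rfl⟩ : ∃ D : Derivation ℤ M M, ⇑D = δM :=
    ⟨Derivation.mk' (AddMonoidHom.mk' δM hMadd).toIntLinearMap hMmul, rfl⟩
  refine ⟨fun σ hσι hσD => ?_, fun σ τ hσι _ hτι _ hu => ?_,
    exists_set_eval_eq_zero_iff_exists_ringEquiv hcompat hsol hgen⟩
  · obtain ⟨c, hc, hdet, hσu⟩ := exists_matrix_of_commute hwronskian hsol hconst hσι hσD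
    exact ⟨c, ⟨hc, hdet, hσu⟩, fun c' ⟨hc', _, hσu'⟩ =>
      matrix_eq_of_sum_mul_eq hcompat hwronskian hc' hc fun i => (hσu' i).symm.trans (hσu i)⟩
  · have hστ : Set.EqOn σ.toRingHom τ.toRingHom (Subfield.closure (Set.range ι ∪ Set.range u)) := by
      refine RingHom.eqOn_field_closure ?_
      rintro _ (⟨z, rfl⟩ | ⟨i, rfl⟩)
      exacts [(hσι z).trans (hτι z).symm, hu i]
    exact RingEquiv.ext fun x => hστ (hgen ▸ Subfield.mem_top x)

/-- Let `M = K(u 0, …, u (n-1))` be a Picard-Vessiot extension of a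
differential field `K` of characteristic zero (embedding `ι`, derivations `δK`, `δM`),
with fundamental system of solutions `u` of a linear homogeneous differential equation of
order `n` over `K`. Then:
(1) every differential `K`-automorphism `σ` of `M` satisfies
    `σ (u i) = ∑ j, ι (c i j) * u j` for a unique invertible matrix `c` of constants;
(2) the resulting map into `GL_n(C)` is injective (an automorphism is determined by its
    matrix); and
(3) the image is an algebraic matrix group over the constants: there is a set `S` of
    polynomials in `n²` variables with constant coefficients such that an invertible
    matrix of constants arises from a differential `K`-automorphism iff all polynomials
    of `S` vanish on it. -/
theorem differential_galois_group_is_algebraic_matrix_group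
    {K M : Type*} [Field K] [CharZero K] [Field M]
    (δK : K → K)
    (hKadd : ∀ x y, δK (x + y) = δK x + δK y)
    (hKmul : ∀ x y, δK (x * y) = x * δK y + y * δK x)
    (ι : K →+* M) (δM : M → M)
    (hMadd : ∀ x y, δM (x + y) = δM x + δM y)
    (hMmul : ∀ x y, δM (x * y) = x * δM y + y * δM x)
    (hcompat : ∀ c : K, δM (ι c) = ι (δK c))
    (n : ℕ) (a : Fin n → K) (u : Fin n → M)
    (hsol : ∀ i, δM^[n] (u i) + ∑ j : Fin n, ι (a j) * δM^[n - 1 - (j : ℕ)] (u i) = 0)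
    (hwronskian : Matrix.det (Matrix.of fun i j : Fin n => δM^[(i : ℕ)] (u j)) ≠ 0)
    (hgen : Subfield.closure (Set.range ι ∪ Set.range u) = ⊤)
    (hconst : ∀ z : M, δM z = 0 → ∃ c : K, δK c = 0 ∧ ι c = z) :
    (∀ σ : M ≃+* M, (∀ c : K, σ (ι c) = ι c) → (∀ x : M, σ (δM x) = δM (σ x)) →
      ∃! c : Matrix (Fin n) (Fin n) K,
        (∀ i j, δK (c i j) = 0) ∧ c.det ≠ 0 ∧
          ∀ i, σ (u i) = ∑ j : Fin n, ι (c i j) * u j) ∧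
    (∀ σ τ : M ≃+* M,
      (∀ c : K, σ (ι c) = ι c) → (∀ x : M, σ (δM x) = δM (σ x)) →
      (∀ c : K, τ (ι c) = ι c) → (∀ x : M, τ (δM x) = δM (τ x)) →
      (∀ i, σ (u i) = τ (u i)) → σ = τ) ∧
    (∃ S : Set (MvPolynomial (Fin n × Fin n) K),
      (∀ p ∈ S, ∀ m, δK (MvPolynomial.coeff m p) = 0) ∧
      ∀ c : Matrix (Fin n) (Fin n) K, (∀ i j, δK (c i j) = 0) → c.det ≠ 0 →
        ((∃ σ : M ≃+* M, (∀ z : K, σ (ι z) = ι z) ∧ (∀ x : M, σ (δM x) = δM (σ x)) ∧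
            ∀ i, σ (u i) = ∑ j : Fin n, ι (c i j) * u j) ↔
          ∀ p ∈ S, MvPolynomial.eval (fun q : Fin n × Fin n => c q.1 q.2) p = 0)) :=
  differential_galois_group_is_algebraic_matrix_group_general δK ι δM hMadd hMmul hcompat n a u hsol
    hwronskian hgen hconst
end

section
/- Let K be a differential field of characteristic zero whose field of constants C is algebraically closed. Every normal algebraic field extension M of K of finite degree, equipped with the unique derivation extending that of K, is a Picard–Vessiot extension of K for some linear homogeneous differential equation with coefficients in K. -/
set_option maxHeartbeats 1000000

open Polynomial

section Basic
variable {M : Type*} [Field M] {d : M → M}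
  (hadd : ∀ x y, d (x + y) = d x + d y)
  (hmul : ∀ x y, d (x * y) = x * d y + y * d x)

include hadd in
theorem d_zero : d 0 = 0 := by
  have := hadd 0 0; simp at this; linear_combination this

include hmul in
theorem d_one : d 1 = 0 := by
  have := hmul 1 1; simp at this; linear_combination this

include hadd in
theorem d_sum {ι : Type*} (s : Finset ι) (f : ι → M) :
    d (∑ i ∈ s, f i) = ∑ i ∈ s, d (f i) :=
  map_sum (AddMonoidHom.mk' d hadd) f s

include hadd in
theorem d_neg (x : M) : d (-x) = - d x := map_neg (AddMonoidHom.mk' d hadd) x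

include hmul in
theorem d_pow (z : M) : ∀ k : ℕ, d (z ^ k) = k * z ^ (k - 1) * d z := by
  intro k
  induction k with
  | zero => simpa using d_one hmul
  | succ n ih =>
    rcases Nat.eq_zero_or_pos n with h | h
    · subst h; simp only [pow_one, zero_add, Nat.cast_one, Nat.sub_self, pow_zero]
      have := hmul z 1; simp at this; linear_combination this
    · rw [pow_succ, hmul (z^n) z, ih]
      have h1 : n - 1 + 1 = n := Nat.succ_pred_eq_of_pos h
      have hz : z ^ n = z ^ (n-1) * z := by rw [← pow_succ, h1]
      rw [Nat.add_sub_cancel]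
      rw [hz]
      push_cast
      ring

omit hadd in
include hmul in
theorem d_iter_const_mul (c : M) (hc : d c = 0) (x : M) :
    ∀ k : ℕ, d^[k] (c * x) = c * d^[k] x := by
  intro k
  induction k generalizing x with
  | zero => simp
  | succ n ih =>
    rw [Function.iterate_succ_apply, hmul, hc, Function.iterate_succ_apply]
    simp [ih]

end Basic

open Polynomial

theorem d_aeval {K M : Type*} [Field K] [Field M] [Algebra K M] {d : M → M}
    (hadd : ∀ x y, d (x + y) = d x + d y)
    (hmul : ∀ x y, d (x * y) = x * d y + y * d x)
    (z : M) (p : K[X]) :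
    d (Polynomial.aeval z p) =
      p.sum (fun i c => d (algebraMap K M c) * z ^ i)
        + Polynomial.aeval z (derivative p) * d z := by
  have h0 : d 0 = 0 := by have := hadd 0 0; simp at this; linear_combination this
  induction p using Polynomial.induction_on' with
  | add p q hp hq =>
    rw [map_add, hadd, hp, hq, Polynomial.sum_add_index]
    · rw [map_add, map_add]; ring
    · intro i; rw [map_zero, h0, zero_mul]
    · intro i b₁ b₂; rw [map_add, hadd]; ring
  | monomial n c =>
    rw [Polynomial.aeval_monomial, hmul, Polynomial.sum_monomial_index,
      derivative_monomial, Polynomial.aeval_monomial, d_pow hmul]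
    · push_cast [map_mul]
      ring
    · rw [map_zero, h0, zero_mul]

open Polynomial

theorem constants_descend {K M : Type*} [Field K] [CharZero K] [Field M] [Algebra K M]
    [FiniteDimensional K M]
    (δK : K → K)
    (hKadd : ∀ x y, δK (x + y) = δK x + δK y)
    (hKmul : ∀ x y, δK (x * y) = x * δK y + y * δK x)
    (halgclosed : ∀ p : Polynomial K, (∀ i, δK (p.coeff i) = 0) → 0 < p.degree →
      ∃ c : K, δK c = 0 ∧ Polynomial.eval c p = 0)
    (δM : M → M)
    (hMadd : ∀ x y, δM (x + y) = δM x + δM y)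
    (hMmul : ∀ x y, δM (x * y) = x * δM y + y * δM x)
    (hcompat : ∀ c : K, δM (algebraMap K M c) = algebraMap K M (δK c)) :
    ∀ z : M, δM z = 0 → ∃ c : K, δK c = 0 ∧ algebraMap K M c = z := by
  have hK0 : δK 0 = 0 := d_zero hKadd
  have hK1 : δK 1 = 0 := d_one hKmul
  have hM0 : δM 0 = 0 := d_zero hMadd
  intro z hz
  set p := minpoly K z with hp
  have hint : IsIntegral K z := Algebra.IsIntegral.isIntegral z
  have hmo : p.Monic := minpoly.monic hint
  have hpne : p ≠ 0 := hmo.ne_zero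
  -- the polynomial with differentiated coefficients
  set q : K[X] := p.sum fun i c => Polynomial.monomial i (δK c) with hqdef
  have hqcoeff : ∀ i, q.coeff i = δK (p.coeff i) := by
    intro i
    rw [hqdef, Polynomial.sum, Polynomial.finset_sum_coeff]
    simp only [Polynomial.coeff_monomial]
    rw [Finset.sum_ite_eq' p.support i (fun j => δK (p.coeff j))]
    split_ifs with h
    · rfl
    · rw [Polynomial.notMem_support_iff.mp h, hK0]
  have haq : Polynomial.aeval z q = 0 := by
    have hd := d_aeval hMadd hMmul z p
    rw [minpoly.aeval, hM0, hz, mul_zero, add_zero] at hd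
    have : Polynomial.aeval z q = p.sum fun i c => δM (algebraMap K M c) * z ^ i := by
      rw [hqdef, Polynomial.sum, map_sum]
      apply Finset.sum_congr rfl
      intro i _
      simp only [Polynomial.aeval_monomial, hcompat]
    rw [this, ← hd]
  have hq0 : q = 0 := by
    by_contra hne
    have h1 : p.degree ≤ q.degree := minpoly.degree_le_of_ne_zero K z hne haq
    have h2 : q.degree < p.degree := by
      rw [Polynomial.degree_eq_natDegree hpne]
      rw [Polynomial.degree_lt_iff_coeff_zero]
      intro m hm
      rw [hqcoeff]
      rcases eq_or_lt_of_le hm with h | h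
      · have : p.coeff m = 1 := by
          rw [← h]; exact_mod_cast hmo.coeff_natDegree
        rw [this, hK1]
      · have : p.coeff m = 0 := Polynomial.coeff_eq_zero_of_natDegree_lt (by exact_mod_cast h)
        rw [this, hK0]
    exact absurd h1 h2.not_ge
  have hconst : ∀ i, δK (p.coeff i) = 0 := by
    intro i; rw [← hqcoeff i, hq0, Polynomial.coeff_zero]
  obtain ⟨c, -, hroot⟩ := halgclosed p hconst (minpoly.degree_pos hint)
  have hirr : Irreducible p := minpoly.irreducible hint
  have hdeg1 : p.degree = 1 := Polynomial.degree_eq_one_of_irreducible_of_root hirr hroot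
  have hform : p = Polynomial.C (p.coeff 1) * Polynomial.X + Polynomial.C (p.coeff 0) :=
    Polynomial.eq_X_add_C_of_degree_le_one hdeg1.le
  have hc1 : p.coeff 1 = 1 := by
    have : p.natDegree = 1 := Polynomial.natDegree_eq_of_degree_eq_some hdeg1
    rw [← this]; exact hmo.coeff_natDegree
  refine ⟨-(p.coeff 0), by rw [d_neg hKadd, hconst 0, neg_zero], ?_⟩
  have := minpoly.aeval K z
  rw [← hp, hform] at this
  rw [map_add, map_mul, Polynomial.aeval_X, Polynomial.aeval_C, Polynomial.aeval_C, hc1, map_one, one_mul] at this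
  rw [map_neg]
  linear_combination -this


theorem wronskian_dep {M : Type*} [Field M] {d : M → M}
    (hadd : ∀ x y, d (x + y) = d x + d y)
    (hmul : ∀ x y, d (x * y) = x * d y + y * d x) :
    ∀ (n : ℕ) (u : Fin n → M),
      Matrix.det (Matrix.of fun i j : Fin n => d^[(i : ℕ)] (u j)) = 0 →
      ∃ c : Fin n → M, c ≠ 0 ∧ (∀ j, d (c j) = 0) ∧ ∑ j, c j * u j = 0 := by
  intro n
  induction n with
  | zero =>
    intro u hdet
    simp [Matrix.det_fin_zero] at hdet
  | succ n IH =>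
    intro u hdet
    by_cases h : Matrix.det (Matrix.of fun i j : Fin n => d^[(i : ℕ)] (u (Fin.castSucc j))) = 0
    · obtain ⟨c, hc0, hcd, hsum⟩ := IH (fun j => u (Fin.castSucc j)) h
      refine ⟨Fin.snoc c 0, ?_, ?_, ?_⟩
      · intro hzero
        apply hc0
        funext j
        have := congrFun hzero (Fin.castSucc j)
        rwa [Fin.snoc_castSucc] at this
      · intro j
        refine Fin.lastCases ?_ ?_ j
        · rw [Fin.snoc_last]; exact d_zero hadd
        · intro k; rw [Fin.snoc_castSucc]; exact hcd k
      · rw [Fin.sum_univ_castSucc]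
        simp only [Fin.snoc_castSucc, Fin.snoc_last, zero_mul, add_zero]
        exact hsum
    · -- the small Wronskian is invertible
      obtain ⟨v, hv0, hWv⟩ := (Matrix.exists_mulVec_eq_zero_iff).mpr hdet
      have hrel : ∀ i : Fin (n+1), ∑ j, d^[(i : ℕ)] (u j) * v j = 0 := by
        intro i
        have := congrFun hWv i
        simpa [Matrix.mulVec, dotProduct] using this
      have hvlast : v (Fin.last n) ≠ 0 := by
        intro h0
        apply h
        rw [← Matrix.exists_mulVec_eq_zero_iff]
        refine ⟨fun j => v (Fin.castSucc j), ?_, ?_⟩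
        · intro hz
          apply hv0
          funext j
          refine Fin.lastCases h0 (fun k => congrFun hz k) j
        · funext i
          have := hrel (Fin.castSucc i)
          rw [Fin.sum_univ_castSucc, h0, mul_zero, add_zero] at this
          simpa [Matrix.mulVec, dotProduct] using this
      set c : Fin (n+1) → M := fun j => v j / v (Fin.last n) with hcdef
      have hclast : c (Fin.last n) = 1 := div_self hvlast
      have hrel' : ∀ i : Fin (n+1), ∑ j, d^[(i : ℕ)] (u j) * c j = 0 := by
        intro i
        have := hrel i
        rw [hcdef]
        have : ∑ j, d^[(i : ℕ)] (u j) * (v j / v (Fin.last n))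
            = (∑ j, d^[(i : ℕ)] (u j) * v j) / v (Fin.last n) := by
          rw [Finset.sum_div]
          exact Finset.sum_congr rfl fun j _ => by ring
        rw [this, hrel i, zero_div]
      have hdrel : ∀ i : Fin n, ∑ j : Fin (n+1), d^[(i : ℕ)] (u j) * d (c j) = 0 := by
        intro i
        have h1 := congrArg d (hrel' (Fin.castSucc i))
        rw [d_sum hadd, d_zero hadd] at h1
        simp only [Fin.coe_castSucc] at h1
        have h2 : ∀ j, d (d^[(i : ℕ)] (u j) * c j)
            = d^[(i : ℕ)] (u j) * d (c j) + c j * d^[((i : ℕ) + 1)] (u j) := by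
          intro j
          rw [hmul, Function.iterate_succ_apply' d (i : ℕ) (u j)]
        rw [Finset.sum_congr rfl fun j _ => h2 j, Finset.sum_add_distrib] at h1
        have h3 := hrel' (Fin.succ i)
        have h4 : ∑ j, c j * d^[((i : ℕ) + 1)] (u j) = 0 := by
          rw [← h3]
          exact Finset.sum_congr rfl fun j _ => by rw [Fin.val_succ]; ring
        rw [h4, add_zero] at h1
        exact h1
      have hdlast : d (c (Fin.last n)) = 0 := by rw [hclast]; exact d_one hmul
      have hdc : ∀ j : Fin n, d (c (Fin.castSucc j)) = 0 := by
        by_contra hne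
        push_neg at hne
        apply h
        rw [← Matrix.exists_mulVec_eq_zero_iff]
        refine ⟨fun j => d (c (Fin.castSucc j)), ?_, ?_⟩
        · intro hz
          obtain ⟨j, hj⟩ := hne
          exact hj (congrFun hz j)
        · funext i
          have := hdrel i
          rw [Fin.sum_univ_castSucc, hdlast, mul_zero, add_zero] at this
          simpa [Matrix.mulVec, dotProduct] using this
      refine ⟨c, ?_, ?_, ?_⟩
      · intro hz
        have := congrFun hz (Fin.last n)
        rw [hclast] at this
        exact one_ne_zero this
      · intro j
        refine Fin.lastCases hdlast hdc j
      · have h0 := hrel' 0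
        simp only [Fin.val_zero, Function.iterate_zero_apply] at h0
        rw [← h0]
        exact Finset.sum_congr rfl fun j _ => mul_comm _ _

open Polynomial

theorem deriv_eq_zero_of_vanish {K M : Type*} [Field K] [CharZero K] [Field M] [Algebra K M]
    [FiniteDimensional K M] {d : M → M}
    (hadd : ∀ x y, d (x + y) = d x + d y)
    (hmul : ∀ x y, d (x * y) = x * d y + y * d x)
    (hbase : ∀ c : K, d (algebraMap K M c) = 0) : ∀ z, d z = 0 := by
  intro z
  have hint : IsIntegral K z := Algebra.IsIntegral.isIntegral z
  have hsep : (minpoly K z).Separable := Algebra.IsSeparable.isSeparable K z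
  have hder := hsep.aeval_derivative_ne_zero (minpoly.aeval K z)
  have hd := d_aeval hadd hmul z (minpoly K z)
  rw [minpoly.aeval, d_zero hadd] at hd
  rw [Polynomial.sum, Finset.sum_eq_zero (fun i _ => by rw [hbase, zero_mul]), zero_add] at hd
  exact (mul_eq_zero.mp hd.symm).resolve_left hder

theorem algEquiv_comm_deriv {K M : Type*} [Field K] [CharZero K] [Field M] [Algebra K M]
    [FiniteDimensional K M] {δK : K → K} {δM : M → M}
    (hMadd : ∀ x y, δM (x + y) = δM x + δM y)
    (hMmul : ∀ x y, δM (x * y) = x * δM y + y * δM x)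
    (hcompat : ∀ c : K, δM (algebraMap K M c) = algebraMap K M (δK c))
    (σ : M ≃ₐ[K] M) : ∀ z : M, σ (δM z) = δM (σ z) := by
  set e : M → M := fun z => σ (δM (σ.symm z)) - δM z with hedef
  have he : ∀ z, e z = 0 := by
    apply deriv_eq_zero_of_vanish (K := K)
    · intro x y
      simp only [hedef, map_add, hMadd]
      ring
    · intro x y
      simp only [hedef, map_add, map_mul, hMmul, AlgEquiv.apply_symm_apply]
      ring
    · intro c
      simp only [hedef]
      rw [show σ.symm (algebraMap K M c) = algebraMap K M c from σ.symm.commutes c,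
        hcompat, σ.commutes, sub_self]
  intro z
  have := he (σ z)
  rw [hedef] at this
  simp only [AlgEquiv.symm_apply_apply] at this
  linear_combination this

theorem algEquiv_comm_deriv_iter {K M : Type*} [Field K] [CharZero K] [Field M] [Algebra K M]
    [FiniteDimensional K M] {δK : K → K} {δM : M → M}
    (hMadd : ∀ x y, δM (x + y) = δM x + δM y)
    (hMmul : ∀ x y, δM (x * y) = x * δM y + y * δM x)
    (hcompat : ∀ c : K, δM (algebraMap K M c) = algebraMap K M (δK c))
    (σ : M ≃ₐ[K] M) (k : ℕ) : ∀ z : M, σ (δM^[k] z) = δM^[k] (σ z) := by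
  induction k with
  | zero => intro z; simp
  | succ m ih =>
    intro z
    rw [Function.iterate_succ_apply', Function.iterate_succ_apply',
      algEquiv_comm_deriv hMadd hMmul hcompat σ, ih]


section Iter
variable {M : Type*} [Field M] {d : M → M}
  (hadd : ∀ x y, d (x + y) = d x + d y)
  (hmul : ∀ x y, d (x * y) = x * d y + y * d x)

include hadd in
theorem d_iter_zero (k : ℕ) : d^[k] 0 = 0 := by
  induction k with
  | zero => rfl
  | succ m ih => rw [Function.iterate_succ_apply, d_zero hadd]; exact ih

include hadd in
theorem d_iter_add (x y : M) (k : ℕ) : d^[k] (x + y) = d^[k] x + d^[k] y := by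
  induction k generalizing x y with
  | zero => rfl
  | succ m ih => rw [Function.iterate_succ_apply, hadd, Function.iterate_succ_apply,
      Function.iterate_succ_apply, ih]

include hadd hmul in
theorem eqn_span {n : ℕ} (b : Fin n → M) (CM : Subfield M) (hCM : ∀ c : CM, d (c : M) = 0)
    (u : Fin n → M)
    (hb : ∀ i, d^[n] (u i) + ∑ j : Fin n, b j * d^[n - 1 - (j : ℕ)] (u i) = 0) :
    ∀ x ∈ Submodule.span CM (Set.range u),
      d^[n] x + ∑ j : Fin n, b j * d^[n - 1 - (j : ℕ)] x = 0 := by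
  intro x hx
  induction hx using Submodule.span_induction with
  | mem y hy => obtain ⟨i, rfl⟩ := hy; exact hb i
  | zero =>
    simp only [d_iter_zero hadd, mul_zero, Finset.sum_const_zero, add_zero]
  | add y z _ _ py pz =>
    have e1 : ∀ j : Fin n, b j * d^[n - 1 - (j : ℕ)] (y + z)
        = b j * d^[n - 1 - (j : ℕ)] y + b j * d^[n - 1 - (j : ℕ)] z := by
      intro j; rw [d_iter_add hadd]; ring
    rw [Finset.sum_congr rfl fun j _ => e1 j, Finset.sum_add_distrib, d_iter_add hadd]
    linear_combination py + pz
  | smul c y _ py =>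
    have e2 : ∀ k : ℕ, d^[k] ((c : M) * y) = (c : M) * d^[k] y :=
      fun k => d_iter_const_mul hmul (c : M) (hCM c) y k
    show d^[n] ((c : M) * y) + ∑ j : Fin n, b j * d^[n - 1 - (j : ℕ)] ((c : M) * y) = 0
    have e3 : ∀ j : Fin n, b j * d^[n - 1 - (j : ℕ)] ((c : M) * y)
        = (c : M) * (b j * d^[n - 1 - (j : ℕ)] y) := by
      intro j; rw [e2]; ring
    rw [e2 n, Finset.sum_congr rfl fun j _ => e3 j, ← Finset.mul_sum]
    linear_combination (c : M) * py
end Iter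

/-- Let `K` be a differential field of characteristic zero whose field of
constants is algebraically closed (every polynomial of positive degree all of whose
coefficients are constants has a constant root). Every normal algebraic field extension
`M` of `K` of finite degree, equipped with the (unique) derivation `δM` extending that of
`K`, is a Picard-Vessiot extension of `K` for some linear homogeneous differential
equation with coefficients in `K`: `M` is generated over `K` by a fundamental system of
solutions of such an equation and has the same field of constants as `K`. -/
theorem normal_finite_extension_isPicardVessiot
    {K M : Type*} [Field K] [CharZero K] [Field M] [Algebra K M]
    [FiniteDimensional K M] [Normal K M]
    (δK : K → K)
    (hKadd : ∀ x y, δK (x + y) = δK x + δK y)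
    (hKmul : ∀ x y, δK (x * y) = x * δK y + y * δK x)
    (halgclosed : ∀ p : Polynomial K, (∀ i, δK (p.coeff i) = 0) → 0 < p.degree →
      ∃ c : K, δK c = 0 ∧ Polynomial.eval c p = 0)
    (δM : M → M)
    (hMadd : ∀ x y, δM (x + y) = δM x + δM y)
    (hMmul : ∀ x y, δM (x * y) = x * δM y + y * δM x)
    (hcompat : ∀ c : K, δM (algebraMap K M c) = algebraMap K M (δK c)) :
    ∃ (n : ℕ) (a : Fin n → K) (u : Fin n → M),
      (∀ i, δM^[n] (u i) +
        ∑ j : Fin n, algebraMap K M (a j) * δM^[n - 1 - (j : ℕ)] (u i) = 0) ∧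
      Matrix.det (Matrix.of fun i j : Fin n => δM^[(i : ℕ)] (u j)) ≠ 0 ∧
      Subfield.closure (Set.range (algebraMap K M) ∪ Set.range u) = ⊤ ∧
      (∀ z : M, δM z = 0 → ∃ c : K, δK c = 0 ∧ algebraMap K M c = z) := by
  classical
  have hconst := constants_descend δK hKadd hKmul halgclosed δM hMadd hMmul hcompat
  haveI : IsGalois K M := ⟨⟩
  obtain ⟨θ, hθ⟩ := Field.exists_primitive_element K M
  -- the subfield of constants of M
  let CM : Subfield M :=
    { carrier := {z | δM z = 0}
      mul_mem' := fun {a b} ha hb => by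
        simp only [Set.mem_setOf_eq] at *
        rw [hMmul, ha, hb, mul_zero, mul_zero, add_zero]
      one_mem' := d_one hMmul
      add_mem' := fun {a b} ha hb => by
        simp only [Set.mem_setOf_eq] at *
        rw [hMadd, ha, hb, add_zero]
      zero_mem' := d_zero hMadd
      neg_mem' := fun {a} ha => by
        simp only [Set.mem_setOf_eq] at *
        rw [d_neg hMadd, ha, neg_zero]
      inv_mem' := fun a ha => by
        simp only [Set.mem_setOf_eq] at *
        rcases eq_or_ne a 0 with rfl | h0
        · rw [inv_zero]; exact ha
        · have := hMmul a a⁻¹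
          rw [mul_inv_cancel₀ h0, d_one hMmul, ha, mul_zero, add_zero] at this
          exact (mul_eq_zero.mp this.symm).resolve_left h0 }
  have hCM : ∀ c : CM, δM (c : M) = 0 := fun c => c.2
  -- the orbit of θ under the Galois group
  have hSfin : (Set.range (fun σ : M ≃ₐ[K] M => σ θ)).Finite := Set.finite_range _
  obtain ⟨t, hts, hspan, hli⟩ :=
    exists_linearIndependent CM (Set.range (fun σ : M ≃ₐ[K] M => σ θ))
  have htfin : t.Finite := hSfin.subset hts
  set n := htfin.toFinset.card with hn
  set e := htfin.toFinset.equivFin with he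
  set u : Fin n → M := fun i => ((e.symm i : M)) with hu
  have humem : ∀ i, u i ∈ t := fun i => htfin.mem_toFinset.mp (e.symm i).2
  have hurange : Set.range u = t := by
    ext x
    constructor
    · rintro ⟨i, rfl⟩; exact humem i
    · intro hx
      exact ⟨e ⟨x, htfin.mem_toFinset.mpr hx⟩, by simp [hu]⟩
  have huli : LinearIndependent CM u := by
    have hf : Function.Injective (fun i : Fin n => (⟨(e.symm i : M), humem i⟩ : t)) := by
      intro i j hij
      have hval : ((⟨(e.symm i : M), humem i⟩ : t) : M)
          = ((⟨(e.symm j : M), humem j⟩ : t) : M) := congrArg Subtype.val hij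
      exact e.symm.injective (Subtype.ext hval)
    have h2 := hli.comp _ hf
    exact h2
  -- nonvanishing of the Wronskian
  have hWdet : Matrix.det (Matrix.of fun i j : Fin n => δM^[(i : ℕ)] (u j)) ≠ 0 := by
    intro h0
    obtain ⟨c, hc0, hcd, hcs⟩ := wronskian_dep hMadd hMmul n u h0
    have hz := Fintype.linearIndependent_iff.mp huli (fun j => (⟨c j, hcd j⟩ : CM)) ?_
    · apply hc0
      funext j
      exact congrArg Subtype.val (hz j)
    · exact (Finset.sum_congr rfl (fun j _ => rfl : ∀ j ∈ Finset.univ,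
        ((⟨c j, hcd j⟩ : CM) • u j) = c j * u j)).trans hcs
  haveI : CharZero M := charZero_of_injective_algebraMap (algebraMap K M).injective
  -- the coefficient matrix and its invertibility
  set B : Matrix (Fin n) (Fin n) M :=
    Matrix.of (fun i j : Fin n => δM^[n - 1 - (j : ℕ)] (u i)) with hB
  have hBdet : B.det ≠ 0 := by
    have hBW : B = ((Matrix.of fun i j : Fin n => δM^[(i : ℕ)] (u j)).transpose).submatrix
        id ⇑(Fin.revPerm) := by
      ext i j
      simp only [hB, Matrix.of_apply, Matrix.submatrix_apply, Matrix.transpose_apply,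
        id_eq, Fin.revPerm_apply, Fin.val_rev]
      have hidx : n - 1 - (j : ℕ) = n - ((j : ℕ) + 1) := by omega
      rw [hidx]
    rw [hBW, Matrix.det_permute', Matrix.det_transpose]
    rcases Int.units_eq_one_or (Equiv.Perm.sign (Fin.revPerm : Equiv.Perm (Fin n))) with h | h <;>
      simp [h, hWdet]
  have hBu : IsUnit B.det := isUnit_iff_ne_zero.mpr hBdet
  set a' : Fin n → M := B⁻¹.mulVec (fun i => -(δM^[n] (u i))) with ha'
  have hBa : B.mulVec a' = fun i => -(δM^[n] (u i)) := by
    rw [ha', Matrix.mulVec_mulVec, Matrix.mul_nonsing_inv _ hBu, Matrix.one_mulVec]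
  have heq : ∀ i, δM^[n] (u i) + ∑ j : Fin n, a' j * δM^[n - 1 - (j : ℕ)] (u i) = 0 := by
    intro i
    have h1 := congrFun hBa i
    simp only [Matrix.mulVec, dotProduct, hB, Matrix.of_apply] at h1
    have h2 : ∑ j : Fin n, a' j * δM^[n - 1 - (j : ℕ)] (u i)
        = ∑ j : Fin n, δM^[n - 1 - (j : ℕ)] (u i) * a' j :=
      Finset.sum_congr rfl fun j _ => mul_comm _ _
    rw [h2, h1]
    ring
  have huniq : ∀ b : Fin n → M,
      (∀ i, δM^[n] (u i) + ∑ j : Fin n, b j * δM^[n - 1 - (j : ℕ)] (u i) = 0) → b = a' := by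
    intro b hb
    have hBb : B.mulVec b = fun i => -(δM^[n] (u i)) := by
      funext i
      simp only [Matrix.mulVec, dotProduct, hB, Matrix.of_apply]
      have h3 := hb i
      have h2 : ∑ j : Fin n, δM^[n - 1 - (j : ℕ)] (u i) * b j
          = ∑ j : Fin n, b j * δM^[n - 1 - (j : ℕ)] (u i) :=
        Finset.sum_congr rfl fun j _ => mul_comm _ _
      rw [h2]
      linear_combination h3
    calc b = B⁻¹.mulVec (B.mulVec b) := by
            rw [Matrix.mulVec_mulVec, Matrix.nonsing_inv_mul _ hBu, Matrix.one_mulVec]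
    _ = a' := by rw [hBb, ha']
  -- every Galois conjugate of θ lies in the span of u
  have hspanS : ∀ σ : M ≃ₐ[K] M, σ θ ∈ Submodule.span CM (Set.range u) := by
    intro σ
    rw [hurange, hspan]
    exact Submodule.subset_span ⟨σ, rfl⟩
  -- Galois invariance of the coefficients
  have hinv : ∀ (σ : M ≃ₐ[K] M) (j : Fin n), σ (a' j) = a' j := by
    intro σ j
    have hσP : ∀ i, δM^[n] (u i)
        + ∑ jj : Fin n, σ (a' jj) * δM^[n - 1 - (jj : ℕ)] (u i) = 0 := by
      intro i
      obtain ⟨τ, hτ⟩ : u i ∈ Set.range (fun σ : M ≃ₐ[K] M => σ θ) := hts (humem i)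
      have h1 : σ.symm (u i) ∈ Submodule.span CM (Set.range u) := by
        rw [← hτ]
        exact (show σ.symm (τ θ) = (τ.trans σ.symm) θ from rfl) ▸ hspanS (τ.trans σ.symm)
      have h2 := eqn_span hMadd hMmul a' CM hCM u heq (σ.symm (u i)) h1
      have h3 := congrArg σ h2
      rw [map_add, map_sum, map_zero] at h3
      have h4 : σ (δM^[n] (σ.symm (u i))) = δM^[n] (u i) := by
        rw [algEquiv_comm_deriv_iter (δK := δK) hMadd hMmul hcompat σ n,
          AlgEquiv.apply_symm_apply]
      have h5 : ∀ jj : Fin n, σ (a' jj * δM^[n - 1 - (jj : ℕ)] (σ.symm (u i)))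
          = σ (a' jj) * δM^[n - 1 - (jj : ℕ)] (u i) := by
        intro jj
        rw [map_mul, algEquiv_comm_deriv_iter (δK := δK) hMadd hMmul hcompat σ,
          AlgEquiv.apply_symm_apply]
      rw [h4, Finset.sum_congr rfl fun jj _ => h5 jj] at h3
      exact h3
    exact congrFun (huniq _ hσP) j
  have haK : ∀ j, ∃ aj : K, algebraMap K M aj = a' j := by
    intro j
    have h : a' j ∈ IntermediateField.fixedField
        (IntermediateField.fixingSubgroup (⊥ : IntermediateField K M)) :=
      fun g => hinv g j
    rw [IsGalois.fixedField_fixingSubgroup ⊥] at h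
    exact IntermediateField.mem_bot.mp h
  choose a ha using haK
  refine ⟨n, a, u, ?_, hWdet, ?_, hconst⟩
  · intro i
    have h6 := heq i
    rw [show (∑ j : Fin n, algebraMap K M (a j) * δM^[n - 1 - (j : ℕ)] (u i))
        = ∑ j : Fin n, a' j * δM^[n - 1 - (j : ℕ)] (u i) from
      Finset.sum_congr rfl fun j _ => by rw [ha]]
    exact h6
  · -- generation
    refine eq_top_iff.mpr fun x _ => ?_
    set E : IntermediateField K M :=
      (Subfield.closure (Set.range (algebraMap K M) ∪ Set.range u)).toIntermediateField
        (fun c => Subfield.subset_closure (Or.inl ⟨c, rfl⟩)) with hE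
    have hθE : θ ∈ E := by
      have hmem : θ ∈ Submodule.span CM (Set.range u) := by
        simpa using hspanS 1
      refine Submodule.span_induction ?_ ?_ ?_ ?_ hmem
      · rintro y ⟨i, rfl⟩
        exact Subfield.subset_closure (Or.inr ⟨i, rfl⟩)
      · exact zero_mem E
      · intro y z _ _ hy hz
        exact add_mem hy hz
      · intro c y _ hy
        obtain ⟨k, -, hk⟩ := hconst (c : M) c.2
        have hc : (c : M) ∈ E := hk ▸ E.algebraMap_mem k
        show (c : M) * y ∈ E
        exact mul_mem hc hy
    have htop : (⊤ : IntermediateField K M) ≤ E := by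
      rw [← hθ]
      exact IntermediateField.adjoin_le_iff.mpr (Set.singleton_subset_iff.mpr hθE)
    exact htop (IntermediateField.mem_top (x := x))
end

section
/- Let K be a differential field of characteristic zero, M a Picard–Vessiot extension of K, and L an intermediate differential field (K ⊆ L ⊆ M with L stable under the derivation of M). Then M is a Picard–Vessiot extension of L for some linear homogeneous differential equation with coefficients in L. -/
/-- Let `K` be a differential field of characteristic zero, `M` a
Picard-Vessiot extension of `K` (embedding `ι`, derivations `δK`, `δM`, fundamental
system of solutions `u` of a linear homogeneous differential equation over `K`, same
constants as `K`), and `L` an intermediate differential field (`K ⊆ L ⊆ M`, `L` stable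
under `δM`). Then `M` is a Picard-Vessiot extension of `L` for some linear homogeneous
differential equation with coefficients in `L`: `M` is generated over `L` by a
fundamental system of solutions of an equation with coefficients in `L`, and `M` has the
same field of constants as `L`. -/
theorem picardVessiot_over_intermediate_field
    {K M : Type*} [Field K] [CharZero K] [Field M]
    (δK : K → K)
    (hKadd : ∀ x y, δK (x + y) = δK x + δK y)
    (hKmul : ∀ x y, δK (x * y) = x * δK y + y * δK x)
    (ι : K →+* M) (δM : M → M)
    (hMadd : ∀ x y, δM (x + y) = δM x + δM y)
    (hMmul : ∀ x y, δM (x * y) = x * δM y + y * δM x)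
    (hcompat : ∀ c : K, δM (ι c) = ι (δK c))
    (n : ℕ) (a : Fin n → K) (u : Fin n → M)
    (hsol : ∀ i, δM^[n] (u i) + ∑ j : Fin n, ι (a j) * δM^[n - 1 - (j : ℕ)] (u i) = 0)
    (hwronskian : Matrix.det (Matrix.of fun i j : Fin n => δM^[(i : ℕ)] (u j)) ≠ 0)
    (hgen : Subfield.closure (Set.range ι ∪ Set.range u) = ⊤)
    (hconst : ∀ z : M, δM z = 0 → ∃ c : K, δK c = 0 ∧ ι c = z)
    (L : Subfield M) (hKL : Set.range ι ⊆ (L : Set M))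
    (hLdiff : ∀ x ∈ L, δM x ∈ L) :
    ∃ (m : ℕ) (b : Fin m → M) (v : Fin m → M),
      (∀ j, b j ∈ L) ∧
      (∀ i, δM^[m] (v i) + ∑ j : Fin m, b j * δM^[m - 1 - (j : ℕ)] (v i) = 0) ∧
      Matrix.det (Matrix.of fun i j : Fin m => δM^[(i : ℕ)] (v j)) ≠ 0 ∧
      Subfield.closure ((L : Set M) ∪ Set.range v) = ⊤ ∧
      (∀ z : M, δM z = 0 → z ∈ L) := by
  refine ⟨n, fun j => ι (a j), u, fun j => hKL ⟨a j, rfl⟩, hsol, hwronskian, ?_, ?_⟩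
  · rw [eq_top_iff, ← hgen]
    apply Subfield.closure_mono
    exact Set.union_subset_union_left _ hKL
  · intro z hz
    obtain ⟨c, -, hc⟩ := hconst z hz
    exact hc ▸ hKL ⟨c, rfl⟩
end

section
/- Let K be a differential field of characteristic zero with field of constants C, and let k₁, …, k_r be constants (elements of zero derivative) in a differential field extension of K. If k₁, …, k_r are algebraically dependent over K, then they are algebraically dependent over C. -/
open MvPolynomial

/-- Let `K` be a differential field of characteristic zero with field of
constants `C`, and let `k 0, …, k (r-1)` be constants in a differential field extension
`M` of `K`. If `k 0, …, k (r-1)` are algebraically dependent over `K` (there is a nonzero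
polynomial over `K` vanishing on them), then they are algebraically dependent over `C`
(there is a nonzero polynomial with constant coefficients vanishing on them). -/
theorem constants_algebraically_dependent_over_constants
    {K M : Type*} [Field K] [CharZero K] [Field M] [Algebra K M]
    (δK : K → K)
    (hKadd : ∀ x y, δK (x + y) = δK x + δK y)
    (hKmul : ∀ x y, δK (x * y) = x * δK y + y * δK x)
    (δM : M → M)
    (hMadd : ∀ x y, δM (x + y) = δM x + δM y)
    (hMmul : ∀ x y, δM (x * y) = x * δM y + y * δM x)
    (hcompat : ∀ c : K, δM (algebraMap K M c) = algebraMap K M (δK c))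
    (r : ℕ) (k : Fin r → M) (hk : ∀ i, δM (k i) = 0)
    (hdep : ∃ p : MvPolynomial (Fin r) K, p ≠ 0 ∧ MvPolynomial.aeval k p = 0) :
    ∃ p : MvPolynomial (Fin r) K, p ≠ 0 ∧ (∀ m, δK (MvPolynomial.coeff m p) = 0) ∧
      MvPolynomial.aeval k p = 0 := by
  classical
  obtain ⟨p0, hp0ne, hp0ev⟩ := hdep
  have hK0 : δK 0 = 0 := by
    have h := hKadd 0 0
    rw [add_zero] at h
    have h2 : δK 0 + 0 = δK 0 + δK 0 := by rw [add_zero]; exact h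
    exact (add_left_cancel h2).symm
  have hK1 : δK 1 = 0 := by
    have h := hKmul 1 1
    simp only [one_mul, mul_one] at h
    have h2 : δK 1 + 0 = δK 1 + δK 1 := by rw [add_zero]; exact h
    exact (add_left_cancel h2).symm
  have hM0 : δM 0 = 0 := by
    have h := hMadd 0 0
    rw [add_zero] at h
    have h2 : δM 0 + 0 = δM 0 + δM 0 := by rw [add_zero]; exact h
    exact (add_left_cancel h2).symm
  have hM1 : δM 1 = 0 := by
    have h := hMmul 1 1
    simp only [one_mul, mul_one] at h
    have h2 : δM 1 + 0 = δM 1 + δM 1 := by rw [add_zero]; exact h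
    exact (add_left_cancel h2).symm
  set DM : M →+ M := AddMonoidHom.mk' δM hMadd with hDM
  have hDMapp : ∀ x, DM x = δM x := fun _ => rfl
  have hpow : ∀ (i : Fin r) (n : ℕ), δM (k i ^ n) = 0 := by
    intro i n
    induction n with
    | zero => simpa using hM1
    | succ n ih => rw [pow_succ, hMmul, ih, hk i, mul_zero, mul_zero, add_zero]
  have hprodk : ∀ (m : Fin r →₀ ℕ), δM (∏ i ∈ m.support, k i ^ m i) = 0 := by
    intro m
    refine Finset.prod_induction _ (fun x => δM x = 0) ?_ hM1 ?_
    · intro a b ha hb; rw [hMmul, ha, hb, mul_zero, mul_zero, add_zero]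
    · intro i _; exact hpow i (m i)
  -- coefficient of the "coefficientwise derivative"
  have hcoeff : ∀ (p : MvPolynomial (Fin r) K) (n : Fin r →₀ ℕ),
      MvPolynomial.coeff n (∑ m ∈ p.support, monomial m (δK (p.coeff m)))
        = δK (p.coeff n) := by
    intro p n
    rw [MvPolynomial.coeff_sum]
    simp only [MvPolynomial.coeff_monomial]
    rw [Finset.sum_ite_eq' p.support n (fun m => δK (p.coeff m))]
    by_cases hn : n ∈ p.support
    · rw [if_pos hn]
    · rw [if_neg hn]
      rw [MvPolynomial.notMem_support_iff] at hn
      rw [hn, hK0]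
  -- key: if aeval k p = 0 then aeval k (dP p) = 0
  have key : ∀ p : MvPolynomial (Fin r) K, MvPolynomial.aeval k p = 0 →
      MvPolynomial.aeval k (∑ m ∈ p.support, monomial m (δK (p.coeff m))) = 0 := by
    intro p hp
    have h1 : (MvPolynomial.aeval k p : M)
        = ∑ m ∈ p.support, algebraMap K M (p.coeff m) * ∏ i ∈ m.support, k i ^ m i := by
      rw [MvPolynomial.aeval_def, MvPolynomial.eval₂_eq]
    have h2 : δM (MvPolynomial.aeval k p)
        = ∑ m ∈ p.support, algebraMap K M (δK (p.coeff m)) * ∏ i ∈ m.support, k i ^ m i := by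
      rw [h1, ← hDMapp, map_sum]
      refine Finset.sum_congr rfl ?_
      intro m _
      rw [hDMapp, hMmul, hprodk m, mul_zero, zero_add, hcompat, mul_comm]
    have h3 : MvPolynomial.aeval k (∑ m ∈ p.support, monomial m (δK (p.coeff m)))
        = ∑ m ∈ p.support, algebraMap K M (δK (p.coeff m)) * ∏ i ∈ m.support, k i ^ m i := by
      rw [map_sum]
      refine Finset.sum_congr rfl ?_
      intro m _
      rw [MvPolynomial.aeval_monomial]
      rfl
    rw [h3, ← h2, hp, hM0]
  -- main induction on the size of the support
  have main : ∀ n : ℕ, ∀ p : MvPolynomial (Fin r) K, p ≠ 0 → MvPolynomial.aeval k p = 0 →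
      p.support.card ≤ n →
      ∃ q : MvPolynomial (Fin r) K, q ≠ 0 ∧ (∀ m, δK (MvPolynomial.coeff m q) = 0) ∧
        MvPolynomial.aeval k q = 0 := by
    intro n
    induction n with
    | zero =>
      intro p hpne hpev hcard
      exfalso
      apply hpne
      rw [← MvPolynomial.support_eq_empty]
      exact Finset.card_eq_zero.mp (Nat.le_zero.mp hcard)
    | succ n ih =>
      intro p hpne hpev hcard
      obtain ⟨m₀, hm₀⟩ := Finset.nonempty_iff_ne_empty.mpr
        (fun h => hpne (MvPolynomial.support_eq_empty.mp h))
      have hc : p.coeff m₀ ≠ 0 := MvPolynomial.mem_support_iff.mp hm₀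
      set q : MvPolynomial (Fin r) K := C (p.coeff m₀)⁻¹ * p with hq
      have hqcoeff : ∀ m, q.coeff m = (p.coeff m₀)⁻¹ * p.coeff m := by
        intro m; rw [hq, MvPolynomial.coeff_C_mul]
      have hqm₀ : q.coeff m₀ = 1 := by rw [hqcoeff, inv_mul_cancel₀ hc]
      have hqne : q ≠ 0 := fun h => by rw [h, MvPolynomial.coeff_zero] at hqm₀; exact one_ne_zero hqm₀.symm
      have hqev : MvPolynomial.aeval k q = 0 := by
        rw [hq, map_mul, hpev, mul_zero]
      have hqsupp : q.support ⊆ p.support := by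
        intro m hm
        rw [MvPolynomial.mem_support_iff] at hm ⊢
        intro h
        apply hm
        rw [hqcoeff, h, mul_zero]
      have hm₀q : m₀ ∈ q.support := by
        rw [MvPolynomial.mem_support_iff, hqm₀]; exact one_ne_zero
      set dq : MvPolynomial (Fin r) K := ∑ m ∈ q.support, monomial m (δK (q.coeff m)) with hdq
      by_cases hdq0 : dq = 0
      · refine ⟨q, hqne, ?_, hqev⟩
        intro m
        have h2 : δK (MvPolynomial.coeff m q) = MvPolynomial.coeff m dq := by
          rw [hdq]; exact (hcoeff q m).symm
        rw [h2, hdq0, MvPolynomial.coeff_zero]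
      · have hdqev : MvPolynomial.aeval k dq = 0 := key q hqev
        have hdqsupp : dq.support ⊆ q.support.erase m₀ := by
          intro m hm
          rw [MvPolynomial.mem_support_iff, hdq, hcoeff q m] at hm
          refine Finset.mem_erase.mpr ⟨?_, ?_⟩
          · intro h; rw [h, hqm₀, hK1] at hm; exact hm rfl
          · rw [MvPolynomial.mem_support_iff]
            intro h; rw [h, hK0] at hm; exact hm rfl
        have hcard' : dq.support.card ≤ n := by
          have h1 := Finset.card_le_card hdqsupp
          rw [Finset.card_erase_of_mem hm₀q] at h1
          have h2 := Finset.card_le_card hqsupp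
          omega
        exact ih dq hdq0 hdqev hcard'
  exact main p0.support.card p0 hp0ne hp0ev le_rfl
end
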